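/- arXiv:2509.24430 — 8 statements merged into one kernel-verified Lean document; each statement's English description precedes it below -/
import Mathlib

section
/- Let X be a lattice-ordered abelian group, I a nonempty directed preordered set, x : I → X a net and a ∈ X. The following are equivalent: (1) x (o₃)-converges to a; (2) x order-converges to a; (3) there exist a nonempty directed preordered set D and a monotone decreasing net y : D → X with inf_{d∈D} y(d) = 0 such that for every d ∈ D there exists i* ∈ I with |x(i) − a| ≤ y(d) for all i ≥ i*. -/
/-- A relation `r` on `C` makes `C` a directed preordered set:
reflexive, transitive, and every two elements have a common upper bound. -/
def DirectedPre {C : Type} (r : C → C → Prop) : Prop :=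
  (∀ c, r c c) ∧ (∀ a b c, r a b → r b c → r a c) ∧ ∀ a b, ∃ c, r a c ∧ r b c

/-- A net `x : I → X` order-converges to `a`: there are a nonempty directed
preordered set `C`, an increasing net `z : C → X` and a decreasing net
`y : C → X` with `sup z = a = inf y`, sandwiching `x` eventually. -/
def OrderConvergesTo {X : Type*} [Preorder X] {I : Type*} [Preorder I]
    (x : I → X) (a : X) : Prop :=
  ∃ (C : Type) (r : C → C → Prop), Nonempty C ∧ DirectedPre r ∧
    ∃ z y : C → X,
      (∀ c d, r c d → z c ≤ z d) ∧ (∀ c d, r c d → y d ≤ y c) ∧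
      IsLUB (Set.range z) a ∧ IsGLB (Set.range y) a ∧
      ∀ c, ∃ i₀ : I, ∀ i, i₀ ≤ i → z c ≤ x i ∧ x i ≤ y c

/-- Dedekind completeness: every nonempty subset bounded above has a supremum. -/
def DedekindComplete (X : Type*) [Preorder X] : Prop :=
  ∀ S : Set X, S.Nonempty → BddAbove S → ∃ a, IsLUB S a

/-- A regulator (`(D)`-sequence): a double sequence, nonincreasing in the second
index, with infimum `0` in each row. -/
def IsRegulator {X : Type*} [Preorder X] [Zero X] (a : ℕ → ℕ → X) : Prop :=
  (∀ i j, a i (j + 1) ≤ a i j) ∧ ∀ i, IsGLB (Set.range (a i)) 0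

/-- `(D)`-convergence of a net to `ℓ` with respect to some regulator. -/
def DConvergesTo {X : Type*} [Lattice X] [AddCommGroup X] {I : Type*} [Preorder I]
    (x : I → X) (ℓ : X) : Prop :=
  ∃ a : ℕ → ℕ → X, IsRegulator a ∧
    ∀ φ : ℕ → ℕ, ∃ s : X, IsLUB (Set.range fun j => a j (φ j)) s ∧
      ∃ i₀ : I, ∀ i, i₀ ≤ i → |x i - ℓ| ≤ s

/-- Weak σ-distributivity: for every regulator whose diagonal suprema all exist,
the infimum over `φ : ℕ → ℕ` of `sup_j a j (φ j)` is `0`. -/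
def WeaklySigmaDistributive (X : Type*) [Lattice X] [AddCommGroup X] : Prop :=
  ∀ a : ℕ → ℕ → X, IsRegulator a →
    (∀ φ : ℕ → ℕ, ∃ s, IsLUB (Set.range fun j => a j (φ j)) s) →
    IsGLB {s | ∃ φ : ℕ → ℕ, IsLUB (Set.range fun j => a j (φ j)) s} (0 : X)

/-- `(o₃)`-convergence of a net: increasing and decreasing bounding nets over
possibly different directed index sets `C` and `D`. -/
def O3ConvergesTo {X : Type*} [Preorder X] {I : Type*} [Preorder I]
    (x : I → X) (a : X) : Prop :=
  ∃ (C D : Type) (rC : C → C → Prop) (rD : D → D → Prop),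
    Nonempty C ∧ Nonempty D ∧ DirectedPre rC ∧ DirectedPre rD ∧
    ∃ (z : C → X) (y : D → X),
      (∀ c d, rC c d → z c ≤ z d) ∧ (∀ c d, rD c d → y d ≤ y c) ∧
      IsLUB (Set.range z) a ∧ IsGLB (Set.range y) a ∧
      ∀ (c : C) (d : D), ∃ i₀ : I, ∀ i, i₀ ≤ i → z c ≤ x i ∧ x i ≤ y d

/-- For a net in a lattice-ordered abelian group, `(o₃)`-convergence,
order convergence and convergence dominated by a decreasing net with infimum `0`
are all equivalent. -/
theorem o3_iff_order_iff_dominated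
    {X : Type*} [Lattice X] [AddCommGroup X] [CovariantClass X X (· + ·) (· ≤ ·)]
    {I : Type*} [Preorder I] [Nonempty I]
    (hdir : ∀ i j : I, ∃ k, i ≤ k ∧ j ≤ k)
    (x : I → X) (a : X) :
    (O3ConvergesTo x a ↔ OrderConvergesTo x a) ∧
    (OrderConvergesTo x a ↔
      ∃ (D : Type) (r : D → D → Prop), Nonempty D ∧ DirectedPre r ∧
        ∃ y : D → X, (∀ c d, r c d → y d ≤ y c) ∧ IsGLB (Set.range y) (0 : X) ∧
          ∀ d : D, ∃ i₀ : I, ∀ i, i₀ ≤ i → |x i - a| ≤ y d) := by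
  haveI : IsOrderedAddMonoid X :=
    { add_le_add_left := fun a b h c => by
        rw [add_comm a c, add_comm b c]; exact add_le_add_right h c }
  constructor
  · constructor
    · rintro ⟨C, D, rC, rD, hC, hD, ⟨hCr, hCt, hCd⟩, ⟨hDr, hDt, hDd⟩, z, y,
        hzmono, hymono, hzlub, hyglb, hsand⟩
      refine ⟨C × D, fun p q => rC p.1 q.1 ∧ rD p.2 q.2, ⟨hC.some, hD.some⟩,
        ⟨fun p => ⟨hCr _, hDr _⟩,
         fun p q s hpq hqs => ⟨hCt _ _ _ hpq.1 hqs.1, hDt _ _ _ hpq.2 hqs.2⟩,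
         fun p q => ?_⟩,
        fun p => z p.1, fun p => y p.2,
        fun p q h => hzmono _ _ h.1, fun p q h => hymono _ _ h.2, ?_, ?_, ?_⟩
      · obtain ⟨c, hc1, hc2⟩ := hCd p.1 q.1
        obtain ⟨d, hd1, hd2⟩ := hDd p.2 q.2
        exact ⟨(c, d), ⟨hc1, hd1⟩, ⟨hc2, hd2⟩⟩
      · have : Set.range (fun p : C × D => z p.1) = Set.range z := by
          ext u
          constructor
          · rintro ⟨p, rfl⟩; exact ⟨p.1, rfl⟩
          · rintro ⟨c, rfl⟩; exact ⟨(c, hD.some), rfl⟩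
        rw [this]; exact hzlub
      · have : Set.range (fun p : C × D => y p.2) = Set.range y := by
          ext u
          constructor
          · rintro ⟨p, rfl⟩; exact ⟨p.2, rfl⟩
          · rintro ⟨d, rfl⟩; exact ⟨(hC.some, d), rfl⟩
        rw [this]; exact hyglb
      · exact fun p => hsand p.1 p.2
    · rintro ⟨C, r, hC, hCdir, z, y, hzmono, hymono, hzlub, hyglb, hsand⟩
      exact ⟨C, C, r, r, hC, hC, hCdir, hCdir, z, y, hzmono, hymono, hzlub,
        hyglb, fun c d => by
          obtain ⟨e, he1, he2⟩ := hCdir.2.2 c d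
          obtain ⟨i₀, hi₀⟩ := hsand e
          exact ⟨i₀, fun i hi => ⟨le_trans (hzmono _ _ he1) (hi₀ i hi).1,
            le_trans (hi₀ i hi).2 (hymono _ _ he2)⟩⟩⟩
  · constructor
    · rintro ⟨C, r, hC, hCdir, z, y, hzmono, hymono, hzlub, hyglb, hsand⟩
      refine ⟨C, r, hC, hCdir, fun c => y c - z c,
        fun c d h => sub_le_sub (hymono c d h) (hzmono c d h), ⟨?_, ?_⟩, ?_⟩
      · rintro u ⟨c, rfl⟩
        have h1 : z c ≤ a := hzlub.1 ⟨c, rfl⟩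
        have h2 : a ≤ y c := hyglb.1 ⟨c, rfl⟩
        simpa using sub_nonneg.mpr (h1.trans h2)
      · intro b hb
        -- b ≤ y c - z c for all c; show b ≤ 0
        have key : ∀ c d : C, b + z d ≤ y c := by
          intro c d
          obtain ⟨e, he1, he2⟩ := hCdir.2.2 c d
          have hbe : b ≤ y e - z e := hb ⟨e, rfl⟩
          have : b + z d ≤ y e := by
            have := add_le_add_left hbe (z e)
            rw [sub_add_cancel] at this
            exact le_trans (add_le_add_right (hzmono d e he2) b) this
          exact this.trans (hymono c e he1)
        have h2 : ∀ d : C, b + z d ≤ a := by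
          intro d
          exact hyglb.2 (fun u => by rintro ⟨c, rfl⟩; exact key c d)
        have h3 : a ≤ a - b := by
          apply hzlub.2
          rintro u ⟨d, rfl⟩
          exact le_sub_iff_add_le.mpr (by rw [add_comm]; exact h2 d)
        exact (le_sub_self_iff a).mp h3
      · intro c
        obtain ⟨i₀, hi₀⟩ := hsand c
        refine ⟨i₀, fun i hi => ?_⟩
        obtain ⟨h1, h2⟩ := hi₀ i hi
        have ha1 : a ≤ y c := hyglb.1 ⟨c, rfl⟩
        have ha2 : z c ≤ a := hzlub.1 ⟨c, rfl⟩
        rw [abs_le', neg_sub]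
        exact ⟨sub_le_sub h2 ha2, sub_le_sub ha1 h1⟩
    · rintro ⟨D, r, hD, hDdir, y, hymono, hyglb, hdom⟩
      have hy0 : ∀ d, (0 : X) ≤ y d := fun d => hyglb.1 ⟨d, rfl⟩
      refine ⟨D, r, hD, hDdir, fun d => a - y d, fun d => a + y d,
        fun c d h => sub_le_sub_left (hymono c d h) a,
        fun c d h => add_le_add_right (hymono c d h) a, ⟨?_, ?_⟩, ⟨?_, ?_⟩, ?_⟩
      · rintro u ⟨d, rfl⟩
        exact sub_le_self a (hy0 d)
      · intro b hb
        have h1 : ∀ d, a - b ≤ y d := fun d =>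
          sub_le_comm.mp (hb ⟨d, rfl⟩)
        have h0 : a - b ≤ 0 := hyglb.2 (fun u => by rintro ⟨d, rfl⟩; exact h1 d)
        exact sub_nonpos.mp h0
      · rintro u ⟨d, rfl⟩
        exact le_add_of_nonneg_right (hy0 d)
      · intro b hb
        have h1 : ∀ d, b - a ≤ y d := fun d =>
          sub_le_iff_le_add'.mpr (hb ⟨d, rfl⟩)
        have h0 : b - a ≤ 0 := hyglb.2 (fun u => by rintro ⟨d, rfl⟩; exact h1 d)
        exact sub_nonpos.mp h0
      · intro d
        obtain ⟨i₀, hi₀⟩ := hdom d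
        refine ⟨i₀, fun i hi => ?_⟩
        have h := hi₀ i hi
        rw [abs_le', neg_sub] at h
        exact ⟨sub_le_comm.mp h.2, sub_le_iff_le_add'.mp h.1⟩
end

section
/- (Fremlin Lemma) Let X be a Dedekind σ-complete, weakly σ-distributive Riesz space. Let a : ℕ → ℕ → ℕ → X be a triple sequence such that for each n the double sequence (i,j) ↦ a(n,i,j) is a regulator, and assume that for every n and every φ : ℕ → ℕ the set {a(n,i,φ(i+n)) : i ∈ ℕ} is bounded above in X. Then there exists a double sequence b : ℕ → ℕ → X such that for every L ∈ X with 0 < L, every φ : ℕ → ℕ and every k ∈ ℕ, L ⊓ (∑_{n=1}^{k} sup_i a(n,i,φ(i+n))) ≤ sup_j (L ⊓ b(j, φ(j))); moreover for every such L the double sequence (i,j) ↦ L ⊓ b(i,j) is a regulator. -/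
set_option linter.unusedSectionVars false

section Helpers

variable {X : Type*} [Lattice X] [AddCommGroup X] [CovariantClass X X (· + ·) (· ≤ ·)]

private lemma my_add_le_add_right {x y : X} (h : x ≤ y) (z : X) : x + z ≤ y + z := by
  simpa [add_comm] using add_le_add_left h z

private lemma my_inf_add (x y z : X) : (x ⊓ y) + z = (x + z) ⊓ (y + z) := by
  apply le_antisymm
  · exact le_inf (my_add_le_add_right inf_le_left z) (my_add_le_add_right inf_le_right z)
  · have h1 : (x + z) ⊓ (y + z) - z ≤ x := sub_le_iff_le_add.mpr inf_le_left
    have h2 : (x + z) ⊓ (y + z) - z ≤ y := sub_le_iff_le_add.mpr inf_le_right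
    have := le_inf h1 h2
    exact sub_le_iff_le_add.mp this

/-- If `σ` is a LUB of `S` and `x ⊓ s ≤ t` for all `s ∈ S`, then `x ⊓ σ ≤ t`.
(Infinite distributivity of meets over suprema in ℓ-groups.) -/
private lemma meet_le_of_isLUB {S : Set X} {σ x t : X} (h : IsLUB S σ)
    (hb : ∀ s ∈ S, x ⊓ s ≤ t) : x ⊓ σ ≤ t := by
  have key : ∀ s ∈ S, s ≤ t + σ - (x ⊓ σ) := by
    intro s hs
    have h1 : (x ⊓ σ) + s ≤ (x ⊓ s) + σ := by
      rw [my_inf_add, my_inf_add]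
      refine le_inf (inf_le_left.trans (add_le_add_right (h.1 hs) x)) ?_
      rw [add_comm s σ]
      exact inf_le_right
    have h2 : (x ⊓ σ) + s ≤ t + σ := h1.trans (my_add_le_add_right (hb s hs) σ)
    rw [le_sub_iff_add_le, add_comm]
    exact h2
  have hσ : σ ≤ t + σ - (x ⊓ σ) := h.2 key
  have h4 := le_sub_iff_add_le.mp hσ
  rw [add_comm t σ] at h4
  exact le_of_add_le_add_left h4

private lemma isLUB_add_const {f : ℕ → X} {σ : X} (h : IsLUB (Set.range f) σ) (d : X) :
    IsLUB (Set.range fun i => f i + d) (σ + d) := by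
  constructor
  · rintro _ ⟨i, rfl⟩
    exact my_add_le_add_right (h.1 ⟨i, rfl⟩) d
  · intro u hu
    have h1 : ∀ i, f i ≤ u - d := fun i => le_sub_iff_add_le.mpr (hu ⟨i, rfl⟩)
    have h2 : σ ≤ u - d := h.2 (by rintro _ ⟨i, rfl⟩; exact h1 i)
    exact le_sub_iff_add_le.mp h2

/-- Bundle the hypotheses into an `OrderedAddCommGroup` structure (locally). -/
private def mkOAG (X : Type*) [Lattice X] [AddCommGroup X]
    [CovariantClass X X (· + ·) (· ≤ ·)] : IsOrderedAddMonoid X :=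
  { add_le_add_left := fun _ _ h c => add_le_add_left h c }

private lemma my_sum_nonneg {γ : Type*} {F : Finset γ} {f : γ → X}
    (h : ∀ p ∈ F, 0 ≤ f p) : 0 ≤ ∑ p ∈ F, f p := by
  letI := mkOAG X; exact Finset.sum_nonneg h

private lemma my_sum_le_sum {γ : Type*} {F : Finset γ} {f g : γ → X}
    (h : ∀ p ∈ F, f p ≤ g p) : ∑ p ∈ F, f p ≤ ∑ p ∈ F, g p := by
  letI := mkOAG X; exact Finset.sum_le_sum h

private lemma my_single_le_sum {γ : Type*} {F : Finset γ} {f : γ → X}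
    (h : ∀ p ∈ F, 0 ≤ f p) {q : γ} (hq : q ∈ F) : f q ≤ ∑ p ∈ F, f p := by
  letI := mkOAG X; exact Finset.single_le_sum h hq

/-- A finite sum of antitone rows each with infimum `0` has infimum `0`. -/
private lemma glb_zero_sum {γ : Type*} [DecidableEq γ] (F : Finset γ) (g : γ → ℕ → X)
    (hdec : ∀ p ∈ F, ∀ m, g p (m + 1) ≤ g p m)
    (hglb : ∀ p ∈ F, IsGLB (Set.range (g p)) 0) :
    IsGLB (Set.range fun m => ∑ p ∈ F, g p m) 0 := by
  classical
  revert hdec hglb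
  induction F using Finset.induction_on with
  | empty =>
      intro _ _
      constructor
      · rintro _ ⟨m, rfl⟩; simp
      · intro c hc
        simpa using hc ⟨0, rfl⟩
  | @insert q F hq IH =>
      intro hdec hglb
      have hgq := hglb q (Finset.mem_insert_self q F)
      have hgqdec : Antitone (g q) :=
        antitone_nat_of_succ_le (fun m => hdec q (Finset.mem_insert_self q F) m)
      have hh : IsGLB (Set.range fun m => ∑ p ∈ F, g p m) 0 :=
        IH (fun p hp => hdec p (Finset.mem_insert_of_mem hp))
          (fun p hp => hglb p (Finset.mem_insert_of_mem hp))
      have hhdec : Antitone (fun m => ∑ p ∈ F, g p m) :=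
        antitone_nat_of_succ_le (fun m =>
          my_sum_le_sum (fun p hp => hdec p (Finset.mem_insert_of_mem hp) m))

      constructor
      · rintro _ ⟨m, rfl⟩
        show 0 ≤ ∑ p ∈ insert q F, g p m
        rw [Finset.sum_insert hq]
        exact add_nonneg (hgq.1 ⟨m, rfl⟩) (hh.1 ⟨m, rfl⟩)
      · intro c hc
        have hc' : ∀ m, c ≤ g q m + ∑ p ∈ F, g p m := by
          intro m
          have := hc ⟨m, rfl⟩
          simpa only [Finset.sum_insert hq] using this
        have key : ∀ m₀, c - (∑ p ∈ F, g p m₀) ≤ 0 := by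
          intro m₀
          apply hgq.2
          rintro _ ⟨m, rfl⟩
          rcases le_total m m₀ with hm | hm
          · have h1 : c - (∑ p ∈ F, g p m₀) ≤ g q m₀ :=
              sub_le_iff_le_add.mpr (hc' m₀)
            exact h1.trans (hgqdec hm)
          · have h1 : c ≤ g q m + ∑ p ∈ F, g p m₀ :=
              (hc' m).trans (add_le_add_right (hhdec hm) _)
            exact sub_le_iff_le_add.mpr h1
        have : ∀ m₀, c ≤ ∑ p ∈ F, g p m₀ := fun m₀ => sub_nonpos.mp (key m₀)
        exact hh.2 (by rintro _ ⟨m, rfl⟩; exact this m)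

private lemma glb_zero_smul [Module ℝ X] [PosSMulMono ℝ X] {c : ℝ} (hc : 0 < c)
    {f : ℕ → X} (h : IsGLB (Set.range f) 0) :
    IsGLB (Set.range fun m => c • f m) 0 := by
  constructor
  · rintro _ ⟨m, rfl⟩
    exact smul_nonneg hc.le (h.1 ⟨m, rfl⟩)
  · intro d hd
    have h1 : ∀ m, c⁻¹ • d ≤ f m := by
      intro m
      have := smul_le_smul_of_nonneg_left (hd ⟨m, rfl⟩) (inv_nonneg.mpr hc.le)
      rwa [inv_smul_smul₀ hc.ne'] at this
    have h2 : c⁻¹ • d ≤ 0 := h.2 (by rintro _ ⟨m, rfl⟩; exact h1 m)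
    have h3 := smul_le_smul_of_nonneg_left h2 hc.le
    rwa [smul_inv_smul₀ hc.ne', smul_zero] at h3

private lemma geo_sum_le_one (k : ℕ) : ∑ n ∈ Finset.Icc 1 k, ((2:ℝ) ^ n)⁻¹ ≤ 1 := by
  have heq : ∀ k : ℕ, ∑ n ∈ Finset.Icc 1 k, ((2:ℝ) ^ n)⁻¹ = 1 - ((2:ℝ) ^ k)⁻¹ := by
    intro k
    induction k with
    | zero => simp
    | succ k ih =>
        have hins : Finset.Icc 1 (k + 1) = insert (k + 1) (Finset.Icc 1 k) := by
          ext x; simp [Finset.mem_Icc, Finset.mem_insert]; omega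
        rw [hins, Finset.sum_insert (by simp), ih]
        have h2 : (2:ℝ) ^ (k+1) = 2 * 2 ^ k := by ring
        field_simp
        ring
  rw [heq]
  have : (0:ℝ) < ((2:ℝ) ^ k)⁻¹ := by positivity
  linarith

end Helpers

set_option maxHeartbeats 1000000 in
/-- Fremlin Lemma: In a Dedekind σ-complete, weakly σ-distributive
Riesz space, a triple sequence of regulators can be dominated by a single
double sequence `b` as stated. -/
theorem fremlin_lemma
    {X : Type*} [Lattice X] [AddCommGroup X] [CovariantClass X X (· + ·) (· ≤ ·)]
    [Module ℝ X] [PosSMulMono ℝ X]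
    (hσ : ∀ S : Set X, S.Nonempty → S.Countable → BddAbove S → ∃ a, IsLUB S a)
    (hwd : WeaklySigmaDistributive X)
    (a : ℕ → ℕ → ℕ → X)
    (hreg : ∀ n, IsRegulator (a n))
    (hbdd : ∀ (n : ℕ) (φ : ℕ → ℕ), BddAbove (Set.range fun i => a n i (φ (i + n)))) :
    ∃ b : ℕ → ℕ → X,
      ∀ L : X, 0 < L →
        IsRegulator (fun i j => L ⊓ b i j) ∧
        ∀ (φ : ℕ → ℕ) (k : ℕ) (s : ℕ → X),
          (∀ n, IsLUB (Set.range fun i => a n i (φ (i + n))) (s n)) →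
          ∃ t : X, IsLUB (Set.range fun j => L ⊓ b j (φ j)) t ∧
            L ⊓ (∑ n ∈ Finset.Icc 1 k, s n) ≤ t := by
  classical
  set b : ℕ → ℕ → X := fun j m =>
    ∑ p ∈ Finset.Icc 1 j ×ˢ Finset.range (j + 1), ((2:ℝ) ^ (p.1 + p.2)) • a p.1 p.2 m
    with hbdef
  have ha0 : ∀ n i m, 0 ≤ a n i m := fun n i m => ((hreg n).2 i).1 ⟨m, rfl⟩
  have hadec : ∀ n i m, a n i (m + 1) ≤ a n i m := fun n i m => (hreg n).1 i m
  have hb0 : ∀ j m, 0 ≤ b j m := fun j m =>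
    my_sum_nonneg fun p _ => smul_nonneg (by positivity) (ha0 p.1 p.2 m)
  have hbdec : ∀ j m, b j (m + 1) ≤ b j m := fun j m =>
    my_sum_le_sum fun p _ =>
      smul_le_smul_of_nonneg_left (hadec p.1 p.2 m) (by positivity)
  have hterm : ∀ n i m, 1 ≤ n → ((2:ℝ) ^ (n + i)) • a n i m ≤ b (i + n) m := by
    intro n i m hn
    show ((2:ℝ) ^ (n + i)) • a n i m ≤
      ∑ p ∈ Finset.Icc 1 (i + n) ×ˢ Finset.range (i + n + 1),
        ((2:ℝ) ^ (p.1 + p.2)) • a p.1 p.2 m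
    have hmem : ((n, i) : ℕ × ℕ) ∈ Finset.Icc 1 (i + n) ×ˢ Finset.range (i + n + 1) :=
      Finset.mem_product.mpr ⟨Finset.mem_Icc.mpr ⟨hn, Nat.le_add_left n i⟩,
        Finset.mem_range.mpr (Nat.lt_succ_of_le (Nat.le_add_right i n))⟩
    exact my_single_le_sum (f := fun p : ℕ × ℕ => ((2:ℝ) ^ (p.1 + p.2)) • a p.1 p.2 m)
      (fun p _ => smul_nonneg (by positivity) (ha0 p.1 p.2 m)) hmem
  refine ⟨b, fun L hL => ⟨⟨fun i j => inf_le_inf_left L (hbdec i j), fun i => ?_⟩, ?_⟩⟩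
  · -- row i of L ⊓ b is a regulator row
    constructor
    · rintro _ ⟨m, rfl⟩
      exact le_inf hL.le (hb0 i m)
    · intro c hc
      have hcb : ∀ m, c ≤ b i m := fun m => (hc ⟨m, rfl⟩).trans inf_le_right
      have hglb : IsGLB (Set.range fun m =>
          ∑ p ∈ Finset.Icc 1 i ×ˢ Finset.range (i + 1),
            ((2:ℝ) ^ (p.1 + p.2)) • a p.1 p.2 m) 0 := by
        refine glb_zero_sum (Finset.Icc 1 i ×ˢ Finset.range (i + 1))
          (fun p m => ((2:ℝ) ^ (p.1 + p.2)) • a p.1 p.2 m)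
          (fun p _ m => smul_le_smul_of_nonneg_left (hadec p.1 p.2 m) (by positivity))
          (fun p _ => glb_zero_smul (by positivity) ((hreg p.1).2 p.2))
      exact hglb.2 (by rintro _ ⟨m, rfl⟩; exact hcb m)
  · -- main inequality
    intro φ k s hs
    obtain ⟨t, ht⟩ := hσ (Set.range fun j => L ⊓ b j (φ j)) ⟨_, ⟨0, rfl⟩⟩
      (Set.countable_range _) ⟨L, by rintro _ ⟨j, rfl⟩; exact inf_le_left⟩
    refine ⟨t, ht, ?_⟩
    have h0t : (0:X) ≤ t := (le_inf hL.le (hb0 0 (φ 0))).trans (ht.1 ⟨0, rfl⟩)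
    have grand : ∀ ι : ℕ → ℕ,
        L ⊓ (∑ n ∈ Finset.Icc 1 k, a n (ι n) (φ (ι n + n))) ≤ t := by
      intro ι
      rcases Nat.eq_zero_or_pos k with hk | hk
      · subst hk
        rw [show Finset.Icc 1 0 = ∅ from Finset.Icc_eq_empty (by omega), Finset.sum_empty]
        exact inf_le_right.trans h0t
      · have hFne : (Finset.Icc 1 k).Nonempty := ⟨1, Finset.mem_Icc.mpr ⟨le_refl 1, hk⟩⟩
        set G := (Finset.Icc 1 k).sup' hFne (fun n => b (ι n + n) (φ (ι n + n))) with hGdef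
        have hG0 : 0 ≤ G :=
          (hb0 (ι 1 + 1) (φ (ι 1 + 1))).trans
            (Finset.le_sup' (f := fun n => b (ι n + n) (φ (ι n + n)))
              (Finset.mem_Icc.mpr ⟨le_refl 1, hk⟩))
        have step1 : ∀ n ∈ Finset.Icc 1 k,
            a n (ι n) (φ (ι n + n)) ≤ ((2:ℝ) ^ (n + ι n))⁻¹ • G := by
          intro n hn
          have h1 : ((2:ℝ) ^ (n + ι n)) • a n (ι n) (φ (ι n + n)) ≤
              b (ι n + n) (φ (ι n + n)) := hterm n (ι n) _ (Finset.mem_Icc.mp hn).1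
          have h2 : ((2:ℝ) ^ (n + ι n)) • a n (ι n) (φ (ι n + n)) ≤ G :=
            h1.trans (Finset.le_sup' (f := fun n => b (ι n + n) (φ (ι n + n))) hn)
          have h3 := smul_le_smul_of_nonneg_left h2
            (inv_nonneg.mpr (by positivity : (0:ℝ) ≤ (2:ℝ) ^ (n + ι n)))
          rwa [inv_smul_smul₀ (by positivity) _] at h3
        have step2 : (∑ n ∈ Finset.Icc 1 k, a n (ι n) (φ (ι n + n))) ≤ G := by
          have h4 : (∑ n ∈ Finset.Icc 1 k, a n (ι n) (φ (ι n + n))) ≤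
              ∑ n ∈ Finset.Icc 1 k, ((2:ℝ) ^ (n + ι n))⁻¹ • G :=
            my_sum_le_sum step1
          have h5 : ∑ n ∈ Finset.Icc 1 k, ((2:ℝ) ^ (n + ι n))⁻¹ • G =
              (∑ n ∈ Finset.Icc 1 k, ((2:ℝ) ^ (n + ι n))⁻¹) • G :=
            (Finset.sum_smul).symm
          have hc1 : (∑ n ∈ Finset.Icc 1 k, ((2:ℝ) ^ (n + ι n))⁻¹) ≤ 1 := by
            refine le_trans (Finset.sum_le_sum fun n _ => ?_) (geo_sum_le_one k)
            exact inv_anti₀ (by positivity)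
              (pow_le_pow_right₀ (by norm_num) (Nat.le_add_right n (ι n)))
          have h6 : (∑ n ∈ Finset.Icc 1 k, ((2:ℝ) ^ (n + ι n))⁻¹) • G ≤ (1:ℝ) • G := by
            have h7 : (0:X) ≤ ((1:ℝ) - ∑ n ∈ Finset.Icc 1 k, ((2:ℝ) ^ (n + ι n))⁻¹) • G :=
              smul_nonneg (by linarith) hG0
            rw [sub_smul] at h7
            exact sub_nonneg.mp h7
          calc (∑ n ∈ Finset.Icc 1 k, a n (ι n) (φ (ι n + n)))
              ≤ (∑ n ∈ Finset.Icc 1 k, ((2:ℝ) ^ (n + ι n))⁻¹) • G := by rw [← h5]; exact h4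
            _ ≤ (1:ℝ) • G := h6
            _ = G := one_smul ℝ G
        have step3 : L ⊓ G ≤ t := by
          rw [hGdef]
          refine Finset.sup'_induction (p := fun x => L ⊓ x ≤ t) hFne
            (fun n => b (ι n + n) (φ (ι n + n))) (fun x hx y hy => ?_) (fun n hn => ?_)
          · refine meet_le_of_isLUB (isLUB_pair (a := x) (b := y)) ?_
            intro u hu
            rcases Set.mem_insert_iff.mp hu with rfl | hu
            · exact hx
            · rw [Set.mem_singleton_iff.mp hu]; exact hy
          · exact ht.1 ⟨ι n + n, rfl⟩
        exact le_trans (inf_le_inf_left L step2) step3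
    have main : ∀ (F : Finset ℕ) (c : X),
        (∀ ι : ℕ → ℕ, L ⊓ (c + ∑ n ∈ F, a n (ι n) (φ (ι n + n))) ≤ t) →
        L ⊓ (c + ∑ n ∈ F, s n) ≤ t := by
      intro F
      induction F using Finset.induction_on with
      | empty => intro c h; simpa using h fun _ => 0
      | @insert q F hq IH =>
          intro c h
          have step : ∀ i : ℕ, ∀ ι : ℕ → ℕ,
              L ⊓ ((c + a q i (φ (i + q))) + ∑ n ∈ F, a n (ι n) (φ (ι n + n))) ≤ t := by
            intro i ι
            have h1 := h (Function.update ι q i)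
            rw [Finset.sum_insert hq] at h1
            have hsum : ∑ n ∈ F, a n (Function.update ι q i n)
                (φ (Function.update ι q i n + n)) = ∑ n ∈ F, a n (ι n) (φ (ι n + n)) :=
              Finset.sum_congr rfl fun n hn => by
                rw [Function.update_of_ne (ne_of_mem_of_not_mem hn hq)]
            rw [hsum, Function.update_self] at h1
            rw [add_assoc]
            exact h1
          have IH' : ∀ i : ℕ, L ⊓ ((c + a q i (φ (i + q))) + ∑ n ∈ F, s n) ≤ t :=
            fun i => IH (c + a q i (φ (i + q))) (step i)
          have hlub : IsLUB (Set.range fun i => a q i (φ (i + q)) + (c + ∑ n ∈ F, s n))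
              (s q + (c + ∑ n ∈ F, s n)) := isLUB_add_const (hs q) _
          have hfin : L ⊓ (s q + (c + ∑ n ∈ F, s n)) ≤ t := by
            refine meet_le_of_isLUB hlub ?_
            rintro _ ⟨i, rfl⟩
            have h2 := IH' i
            rw [show (c + a q i (φ (i + q))) + ∑ n ∈ F, s n =
              a q i (φ (i + q)) + (c + ∑ n ∈ F, s n) by abel] at h2
            exact h2
          rw [Finset.sum_insert hq,
            show c + (s q + ∑ n ∈ F, s n) = s q + (c + ∑ n ∈ F, s n) by abel]
          exact hfin
    have := main (Finset.Icc 1 k) 0 fun ι => by simpa using grand ι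
    simpa using this
end

section
/- Let X be an Archimedean, weakly σ-distributive lattice-ordered abelian group. If a sequence x : ℕ → X (D)-converges to a ∈ X, then x order-converges to a. -/
/-- In an Archimedean, weakly σ-distributive lattice-ordered
abelian group, a `(D)`-convergent sequence is order-convergent. -/
theorem orderConvergesTo_of_dConvergesTo
    {X : Type*} [Lattice X] [AddCommGroup X] [CovariantClass X X (· + ·) (· ≤ ·)]
    (harch : ∀ x y : X, 0 ≤ x → 0 ≤ y → (∀ n : ℕ, n • x ≤ y) → x = 0)
    (hwd : WeaklySigmaDistributive X)
    (x : ℕ → X) (a : X) (h : DConvergesTo x a) :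
    OrderConvergesTo x a := by
  obtain ⟨b, hreg, hφ⟩ := h
  choose s hs hi0 using hφ
  have hanti : ∀ i, Antitone (b i) := fun i =>
    antitone_nat_of_succ_le (fun j => hreg.1 i j)
  have hb0 : ∀ i j, 0 ≤ b i j := fun i j => (hreg.2 i).1 ⟨j, rfl⟩
  have hs0 : ∀ φ, 0 ≤ s φ := fun φ => le_trans (hb0 0 (φ 0)) ((hs φ).1 ⟨0, rfl⟩)
  have hmono : ∀ φ ψ : ℕ → ℕ, (∀ j, φ j ≤ ψ j) → s ψ ≤ s φ := by
    intro φ ψ hle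
    refine (hs ψ).2 ?_
    rintro _ ⟨j, rfl⟩
    exact le_trans (hanti j (hle j)) ((hs φ).1 ⟨j, rfl⟩)
  have hglb : IsGLB (Set.range s) (0 : X) := by
    have := hwd b hreg (fun φ => ⟨s φ, hs φ⟩)
    have hset : {t : X | ∃ φ : ℕ → ℕ, IsLUB (Set.range fun j => b j (φ j)) t}
        = Set.range s := by
      ext t
      constructor
      · rintro ⟨φ, ht⟩
        exact ⟨φ, (ht.unique (hs φ)).symm⟩
      · rintro ⟨φ, rfl⟩
        exact ⟨φ, hs φ⟩
    rwa [hset] at this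
  refine ⟨ℕ → ℕ, fun φ ψ => ∀ j, φ j ≤ ψ j,
    ⟨fun _ => 0⟩,
    ⟨fun φ j => le_rfl, fun φ ψ χ h1 h2 j => le_trans (h1 j) (h2 j),
      fun φ ψ => ⟨fun j => max (φ j) (ψ j), fun j => le_max_left _ _,
        fun j => le_max_right _ _⟩⟩,
    (fun φ => a - s φ), (fun φ => a + s φ), ?_, ?_, ?_, ?_, ?_⟩
  · intro φ ψ hr
    exact sub_le_sub_left (hmono φ ψ hr) a
  · intro φ ψ hr
    exact add_le_add_right (hmono φ ψ hr) a
  · constructor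
    · rintro _ ⟨φ, rfl⟩
      exact sub_le_self a (hs0 φ)
    · intro w hw
      have h0 : a - w ≤ 0 := by
        refine hglb.2 ?_
        rintro _ ⟨φ, rfl⟩
        exact sub_le_comm.mp (hw ⟨φ, rfl⟩)
      exact sub_nonpos.mp h0
  · constructor
    · rintro _ ⟨φ, rfl⟩
      exact le_add_of_nonneg_right (hs0 φ)
    · intro w hw
      have h0 : w - a ≤ 0 := by
        refine hglb.2 ?_
        rintro _ ⟨φ, rfl⟩
        exact sub_le_iff_le_add'.mpr (hw ⟨φ, rfl⟩)
      exact sub_nonpos.mp h0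
  · intro φ
    obtain ⟨i₀, hi⟩ := hi0 φ
    refine ⟨i₀, fun i hii => ?_⟩
    have h1 : x i - a ≤ s φ := le_trans (le_abs_self _) (hi i hii)
    have h2 : -(x i - a) ≤ s φ := le_trans (neg_le_abs _) (hi i hii)
    refine ⟨sub_le_comm.mp ?_, sub_le_iff_le_add'.mp h1⟩
    rw [← neg_sub]
    exact h2
end

section
/- Let X be a Dedekind complete, weakly σ-distributive Riesz space, I a nonempty directed preordered set and x : I → X a net. Then x (D)-converges to some ℓ ∈ X if and only if there exists a double sequence a : ℕ → ℕ → X with 0 ≤ a(n,k) for all n,k, a(n,k+1) ≤ a(n,k) and inf_k a(n,k) = 0 for each n, and a bounded above (there is M ∈ X with a(n,k) ≤ M for all n,k), such that for every φ : ℕ → ℕ there exists i₀ ∈ I with |x(i₁) − x(i₂)| ≤ sup_n a(n, φ(n)) for all i₁, i₂ ≥ i₀. -/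
private lemma negle_aux {X : Type*} [AddCommGroup X] [PartialOrder X]
    [CovariantClass X X (· + ·) (· ≤ ·)] {a b : X} (h : a ≤ b) : -b ≤ -a := by
  have h2 := add_le_add_right h (-a + -b)
  have e1 : -a + -b + a = -b := by abel
  have e2 : -a + -b + b = -a := by abel
  rw [e1, e2] at h2
  exact h2

/-- In a Dedekind complete, weakly σ-distributive Riesz space, a net
is `(D)`-convergent to some limit iff it satisfies the `(D)`-Cauchy condition. -/
theorem dConverges_iff_dCauchy
    {X : Type*} [Lattice X] [AddCommGroup X] [CovariantClass X X (· + ·) (· ≤ ·)]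
    [Module ℝ X] [PosSMulMono ℝ X]
    (hded : DedekindComplete X)
    (hwd : WeaklySigmaDistributive X)
    {I : Type*} [Preorder I] [Nonempty I]
    (hdir : ∀ i j : I, ∃ k, i ≤ k ∧ j ≤ k)
    (x : I → X) :
    (∃ ℓ : X, DConvergesTo x ℓ) ↔
      ∃ a : ℕ → ℕ → X,
        (∀ n k, 0 ≤ a n k) ∧
        (∀ n k, a n (k + 1) ≤ a n k) ∧
        (∀ n, IsGLB (Set.range (a n)) (0 : X)) ∧
        (∃ M : X, ∀ n k, a n k ≤ M) ∧
        ∀ φ : ℕ → ℕ, ∃ s : X, IsLUB (Set.range fun n => a n (φ n)) s ∧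
          ∃ i₀ : I, ∀ i₁ i₂, i₀ ≤ i₁ → i₀ ≤ i₂ → |x i₁ - x i₂| ≤ s := by
  constructor
  · -- (D)-convergent ⇒ (D)-Cauchy
    rintro ⟨ℓ, a, ⟨hdec, hglb⟩, h⟩
    have hpos : ∀ n k, (0:X) ≤ a n k := fun n k => (hglb n).1 ⟨k, rfl⟩
    obtain ⟨s₀, hs₀, -⟩ := h (fun _ => 0)
    have hle0 : ∀ n k, a n k ≤ a n 0 := by
      intro n k
      induction k with
      | zero => exact le_rfl
      | succ k ih => exact (hdec n k).trans ih
    refine ⟨fun n k => (2:ℝ) • a n k, ?_, ?_, ?_, ⟨(2:ℝ) • s₀, ?_⟩, ?_⟩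
    · intro n k; exact smul_nonneg (by norm_num) (hpos n k)
    · intro n k; exact smul_le_smul_of_nonneg_left (hdec n k) (by norm_num)
    · intro n
      constructor
      · rintro y ⟨k, rfl⟩; exact smul_nonneg (by norm_num) (hpos n k)
      · intro c hc
        have h2 : (1/2:ℝ) • c ≤ (0:X) := by
          refine (hglb n).2 ?_
          rintro y ⟨k, rfl⟩
          have := smul_le_smul_of_nonneg_left (hc ⟨k, rfl⟩) (by norm_num : (0:ℝ) ≤ 1/2)
          rwa [smul_smul, show (1/2:ℝ) * 2 = 1 by norm_num, one_smul] at this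
        calc c = (2:ℝ) • ((1/2:ℝ) • c) := by rw [smul_smul]; norm_num
          _ ≤ (2:ℝ) • (0:X) := smul_le_smul_of_nonneg_left h2 (by norm_num)
          _ = 0 := smul_zero _
    · intro n k
      exact smul_le_smul_of_nonneg_left ((hle0 n k).trans (hs₀.1 ⟨n, rfl⟩)) (by norm_num)
    · intro φ
      obtain ⟨s, hs, i₀, hi⟩ := h φ
      refine ⟨(2:ℝ) • s, ⟨?_, ?_⟩, i₀, ?_⟩
      · rintro y ⟨n, rfl⟩
        exact smul_le_smul_of_nonneg_left (hs.1 ⟨n, rfl⟩) (by norm_num)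
      · intro b hb
        have hsb : s ≤ (1/2:ℝ) • b := by
          refine hs.2 ?_
          rintro y ⟨n, rfl⟩
          have := smul_le_smul_of_nonneg_left (hb ⟨n, rfl⟩) (by norm_num : (0:ℝ) ≤ 1/2)
          rwa [smul_smul, show (1/2:ℝ) * 2 = 1 by norm_num, one_smul] at this
        calc (2:ℝ) • s ≤ (2:ℝ) • ((1/2:ℝ) • b) := smul_le_smul_of_nonneg_left hsb (by norm_num)
          _ = b := by rw [smul_smul]; norm_num
      · intro i₁ i₂ h₁ h₂
        have : |x i₁ - x i₂| ≤ |x i₁ - ℓ| + |x i₂ - ℓ| := by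
          have := abs_add_le (x i₁ - ℓ) (-(x i₂ - ℓ))
          rw [abs_neg] at this
          simpa [sub_add_eq_sub_sub, sub_sub_eq_add_sub] using
            (by simpa [show x i₁ - ℓ + -(x i₂ - ℓ) = x i₁ - x i₂ by abel] using this :
              |x i₁ - x i₂| ≤ |x i₁ - ℓ| + |x i₂ - ℓ|)
        refine this.trans ?_
        have h2s : |x i₁ - ℓ| + |x i₂ - ℓ| ≤ s + s :=
          add_le_add (hi i₁ h₁) (hi i₂ h₂)
        refine h2s.trans ?_
        rw [two_smul]
  · -- (D)-Cauchy ⇒ (D)-convergent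
    rintro ⟨a, hpos, hdec, hglb, ⟨M, hM⟩, hC⟩
    choose s hs i₀ hi using hC
    -- the "tail supremum" u φ
    have hU : ∀ φ : ℕ → ℕ, ∃ u : X, IsLUB (x '' {i | i₀ φ ≤ i}) u := by
      intro φ
      refine hded _ ⟨x (i₀ φ), ⟨i₀ φ, le_rfl, rfl⟩⟩ ⟨x (i₀ φ) + s φ, ?_⟩
      rintro y ⟨i, hi', rfl⟩
      have h1 : x i - x (i₀ φ) ≤ s φ :=
        (le_abs_self _).trans (hi φ i (i₀ φ) hi' le_rfl)
      have := add_le_add_left h1 (x (i₀ φ))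
      rwa [sub_add_cancel, add_comm (s φ)] at this
    choose u hu using hU
    -- bounds between tails
    have key : ∀ φ ψ : ℕ → ℕ, ∀ i, i₀ φ ≤ i → x i - s φ ≤ u ψ := by
      intro φ ψ i hiφ
      obtain ⟨j, hjφ, hjψ⟩ := hdir (i₀ φ) (i₀ ψ)
      have h1 : x i - x j ≤ s φ :=
        (le_abs_self _).trans (hi φ i j hiφ hjφ)
      have h2 : x j ≤ u ψ := (hu ψ).1 ⟨j, hjψ, rfl⟩
      have : x i - s φ ≤ x j := by
        have := sub_le_sub_right (sub_le_iff_le_add.mp h1) (s φ)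
        simpa using this
      exact this.trans h2
    -- the infimum ℓ of the u φ
    have hbdd : ∃ m : X, IsLUB (Neg.neg '' Set.range u) m := by
      refine hded _ ⟨-u (fun _ => 0), ⟨u (fun _ => 0), ⟨_, rfl⟩, rfl⟩⟩
        ⟨-(x (i₀ (fun _ => 0)) - s (fun _ => 0)), ?_⟩
      rintro y ⟨_, ⟨ψ, rfl⟩, rfl⟩
      exact negle_aux (key (fun _ => 0) ψ (i₀ (fun _ => 0)) le_rfl)
    obtain ⟨m, hm⟩ := hbdd
    set ℓ := -m with hℓ
    have hglbℓ : IsGLB (Set.range u) ℓ := by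
      constructor
      · rintro y ⟨ψ, rfl⟩
        have : -u ψ ≤ m := hm.1 ⟨u ψ, ⟨ψ, rfl⟩, rfl⟩
        simpa [hℓ] using negle_aux this
      · intro c hc
        have : m ≤ -c := by
          refine hm.2 ?_
          rintro y ⟨_, ⟨ψ, rfl⟩, rfl⟩
          exact negle_aux (hc ⟨ψ, rfl⟩)
        simpa [hℓ] using negle_aux this
    refine ⟨ℓ, a, ⟨hdec, hglb⟩, fun φ => ⟨s φ, hs φ, i₀ φ, fun i hiφ => ?_⟩⟩
    rw [abs_le']
    constructor
    · -- x i - ℓ ≤ s φ, i.e. x i - s φ ≤ ℓ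
      have hlow : x i - s φ ≤ ℓ := hglbℓ.2 (by rintro y ⟨ψ, rfl⟩; exact key φ ψ i hiφ)
      have := sub_le_iff_le_add.mp hlow
      rw [sub_le_iff_le_add, add_comm]
      exact this
    · -- ℓ - x i ≤ s φ
      have hup : u φ ≤ x i + s φ := by
        refine (hu φ).2 ?_
        rintro y ⟨j, hj, rfl⟩
        have h1 : x j - x i ≤ s φ :=
          (le_abs_self _).trans (hi φ j i hj hiφ)
        have h1' : x j ≤ s φ + x i := sub_le_iff_le_add.mp h1
        exact h1'.trans_eq (add_comm _ _)
      have hℓu : ℓ ≤ u φ := hglbℓ.1 ⟨φ, rfl⟩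
      have : ℓ ≤ x i + s φ := hℓu.trans hup
      rw [neg_sub, sub_le_iff_le_add, add_comm]
      exact this
end

section
/- Let X be a Dedekind complete Riesz space and v : ℕ → X with v(n) ≥ 0 for all n. Then the partial-sum sequence n ↦ ∑_{j<n} v(j) (D)-converges to s ∈ X if and only if the unordered-sum net F ↦ ∑_{j∈F} v(j), indexed by finite subsets of ℕ directed by inclusion, (D)-converges to s. -/
private lemma aux_neg_le_neg {X : Type*} [Preorder X] [AddCommGroup X]
    [CovariantClass X X (· + ·) (· ≤ ·)] {a b : X} (h : a ≤ b) : -b ≤ -a := by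
  have h2 := add_le_add_left h (-a - b)
  calc -b = -a - b + a := by abel
    _ ≤ -a - b + b := by rw [add_comm (-a - b) a, add_comm (-a - b) b]; exact h2
    _ = -a := by abel

private lemma aux_sum_nonneg {X : Type*} [Lattice X] [AddCommGroup X]
    [CovariantClass X X (· + ·) (· ≤ ·)] (v : ℕ → X) (hv : ∀ n, 0 ≤ v n)
    (F : Finset ℕ) : 0 ≤ ∑ j ∈ F, v j := by
  classical
  induction F using Finset.cons_induction with
  | empty => simp
  | cons a F ha ih =>
    rw [Finset.sum_cons]
    calc (0 : X) ≤ ∑ j ∈ F, v j := ih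
      _ ≤ ∑ j ∈ F, v j + v a := le_add_of_nonneg_right (hv a)
      _ = v a + ∑ j ∈ F, v j := add_comm _ _

private lemma aux_sum_mono {X : Type*} [Lattice X] [AddCommGroup X]
    [CovariantClass X X (· + ·) (· ≤ ·)] (v : ℕ → X) (hv : ∀ n, 0 ≤ v n)
    {G F : Finset ℕ} (h : G ⊆ F) : ∑ j ∈ G, v j ≤ ∑ j ∈ F, v j := by
  classical
  calc ∑ j ∈ G, v j ≤ ∑ j ∈ G, v j + ∑ j ∈ F \ G, v j :=
        le_add_of_nonneg_right (aux_sum_nonneg v hv _)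
    _ = ∑ j ∈ F \ G, v j + ∑ j ∈ G, v j := add_comm _ _
    _ = ∑ j ∈ F, v j := Finset.sum_sdiff h

/-- In a Dedekind complete Riesz space, for a nonnegative sequence
the partial sums `(D)`-converge to `s` iff the unordered-sum net over finite
subsets of `ℕ` `(D)`-converges to `s`. -/
theorem nonneg_dConvergence_conditional_iff_unconditional
    {X : Type*} [Lattice X] [AddCommGroup X] [CovariantClass X X (· + ·) (· ≤ ·)]
    [Module ℝ X] [PosSMulMono ℝ X]
    (hded : DedekindComplete X)
    (v : ℕ → X) (hv : ∀ n, 0 ≤ v n) (s : X) :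
    DConvergesTo (fun n => ∑ j ∈ Finset.range n, v j) s ↔
      DConvergesTo (fun F : Finset ℕ => ∑ j ∈ F, v j) s := by
  constructor
  · rintro ⟨a, ha, h⟩
    refine ⟨a, ha, fun φ => ?_⟩
    obtain ⟨t, ht, n₀, hn⟩ := h φ
    refine ⟨t, ht, Finset.range n₀, fun F hF => ?_⟩
    set m := max n₀ (F.sup id + 1) with hm
    have hFm : F ⊆ Finset.range m := by
      intro j hj
      simp only [Finset.mem_range]
      exact lt_of_lt_of_le (Nat.lt_succ_of_le (Finset.le_sup (f := id) hj))
        (le_max_right _ _)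
    have h1 : ∑ j ∈ Finset.range n₀, v j ≤ ∑ j ∈ F, v j :=
      aux_sum_mono v hv hF
    have h2 : ∑ j ∈ F, v j ≤ ∑ j ∈ Finset.range m, v j :=
      aux_sum_mono v hv hFm
    have hA := hn n₀ le_rfl
    have hB := hn m (le_max_left _ _)
    rw [abs_le'] at hA hB ⊢
    constructor
    · calc ∑ j ∈ F, v j - s ≤ ∑ j ∈ Finset.range m, v j - s := by
            exact sub_le_sub_right h2 s
        _ ≤ t := hB.1
    · have : -(∑ j ∈ F, v j - s) ≤ -(∑ j ∈ Finset.range n₀, v j - s) :=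
        aux_neg_le_neg (sub_le_sub_right h1 s)
      exact this.trans hA.2
  · rintro ⟨a, ha, h⟩
    refine ⟨a, ha, fun φ => ?_⟩
    obtain ⟨t, ht, F₀, hF⟩ := h φ
    refine ⟨t, ht, F₀.sup id + 1, fun n hn => ?_⟩
    have : F₀ ≤ Finset.range n := by
      intro j hj
      simp only [Finset.mem_range]
      exact lt_of_lt_of_le (Nat.lt_succ_of_le (Finset.le_sup (f := id) hj)) hn
    exact hF (Finset.range n) this
end

section
/- Let H be a σ-algebra on a set Ω, X, Y, Z Riesz spaces with Z Dedekind complete, μ : H → Y nonnegative and σ-additive, and b : X × Y → Z additive in each variable, isotone on positive cones, and transporting σ-additivity. Let (A_n)_{n∈ℕ} be pairwise disjoint members of H, (a_n) elements of X with a_n ≥ 0, and f : Ω → X equal to a_n on A_n and to 0 off ⋃_n A_n. If the unordered-sum net F ↦ ∑_{n∈F} b(a_n, μ(A_n)) order-converges in Z to s, then f is S*-partition integrable on ⋃_n A_n with integral s. -/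
/-- `Q` refines `P`: every member of `Q` is contained in some member of `P`. -/
def Refines {Ω : Type*} (Q P : Set (Set Ω)) : Prop :=
  ∀ s ∈ Q, ∃ t ∈ P, s ⊆ t

/-- `P` is a countable partition of `A` into nonempty pairwise disjoint
measurable sets. -/
def IsCountablePartition {Ω : Type*} [MeasurableSpace Ω]
    (A : Set Ω) (P : Set (Set Ω)) : Prop :=
  P.Countable ∧ (∀ s ∈ P, MeasurableSet s) ∧ (∀ s ∈ P, s.Nonempty) ∧
    (∀ s ∈ P, ∀ t ∈ P, s ≠ t → Disjoint s t) ∧ ⋃₀ P = A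

/-- `μ` is σ-additive: for every pairwise disjoint sequence of measurable sets,
the unordered-sum net of values order-converges to the value of the union. -/
def SigmaAdditive {Ω : Type*} [MeasurableSpace Ω]
    {Y : Type*} [Lattice Y] [AddCommGroup Y] (μ : Set Ω → Y) : Prop :=
  ∀ A : ℕ → Set Ω, (∀ n, MeasurableSet (A n)) →
    (Pairwise fun m n => Disjoint (A m) (A n)) →
    OrderConvergesTo (fun F : Finset ℕ => ∑ n ∈ F, μ (A n)) (μ (⋃ n, A n))

/-- `b` transports σ-additivity of `μ`: for every `0 ≤ x` and every pairwise
disjoint sequence of measurable sets, the unordered-sum net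
`F ↦ ∑_{n∈F} b x (μ (A n))` order-converges to `b x (μ (⋃ n, A n))`. -/
def TransportsSigmaAdditivity {Ω : Type*} [MeasurableSpace Ω]
    {X Y Z : Type*} [Preorder X] [Zero X] [Lattice Z] [AddCommGroup Z]
    (μ : Set Ω → Y) (b : X → Y → Z) : Prop :=
  ∀ x : X, 0 ≤ x → ∀ A : ℕ → Set Ω, (∀ n, MeasurableSet (A n)) →
    (Pairwise fun m n => Disjoint (A m) (A n)) →
    OrderConvergesTo (fun F : Finset ℕ => ∑ n ∈ F, b x (μ (A n)))
      (b x (μ (⋃ n, A n)))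

/-- `f` is `S*`-partition integrable on `A` with integral `s`: for every choice
function there is a regulator controlling the unordered sums over all countable
measurable partitions refining some `P₀`. -/
def SStarPartitionIntegrable {Ω : Type*} [MeasurableSpace Ω]
    {X Y Z : Type*} [Lattice Z] [AddCommGroup Z]
    (μ : Set Ω → Y) (b : X → Y → Z) (f : Ω → X) (A : Set Ω) (s : Z) : Prop :=
  ∀ δ : Set Ω → Ω, (∀ S : Set Ω, S.Nonempty → δ S ∈ S) →
    ∃ a : ℕ → ℕ → Z, IsRegulator a ∧
      ∀ φ : ℕ → ℕ, ∃ t : Z, IsLUB (Set.range fun i => a i (φ i)) t ∧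
        ∃ P₀ : Set (Set Ω), IsCountablePartition A P₀ ∧
          ∀ P : Set (Set Ω), IsCountablePartition A P → Refines P P₀ →
            ∃ SP : Z,
              OrderConvergesTo
                (fun F : {F : Finset (Set Ω) // ↑F ⊆ P} =>
                  ∑ α ∈ F.1, b (f (δ α)) (μ α)) SP ∧
              |SP - s| ≤ t

lemma lemA {Z I : Type*} [Preorder Z] [Preorder I]
    (hdir : ∀ i j : I, ∃ k, i ≤ k ∧ j ≤ k) {x : I → Z} (hx : Monotone x)
    {L : Z} (h : OrderConvergesTo x L) : IsLUB (Set.range x) L := by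
  obtain ⟨C, r, ⟨c0⟩, hD, z, y, hz, hy, hzL, hyG, hev⟩ := h
  constructor
  · rintro _ ⟨i, rfl⟩
    refine hyG.2 ?_
    rintro _ ⟨c, rfl⟩
    obtain ⟨i₀, hi₀⟩ := hev c
    obtain ⟨k, hik, hi0k⟩ := hdir i i₀
    exact (hx hik).trans (hi₀ k hi0k).2
  · intro u hu
    refine hzL.2 ?_
    rintro _ ⟨c, rfl⟩
    obtain ⟨i₀, hi₀⟩ := hev c
    exact (hi₀ i₀ le_rfl).1.trans (hu ⟨i₀, rfl⟩)

lemma lemB {Z I : Type*} [Preorder Z] [Preorder I]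
    {x : I → Z} (hx : Monotone x) {L : Z} (h : IsLUB (Set.range x) L)
    (j : Finset ℕ → I) (hjm : Monotone j) (hjs : Function.Surjective j) :
    OrderConvergesTo x L := by
  refine ⟨Finset ℕ, (· ≤ ·), ⟨∅⟩,
    ⟨fun c => le_refl c, fun a b c => le_trans, fun a b => ⟨a ⊔ b, le_sup_left, le_sup_right⟩⟩,
    fun K => x (j K), fun _ => L, fun c d hcd => hx (hjm hcd), fun _ _ _ => le_rfl, ?_, ?_, ?_⟩
  · have : Set.range (fun K => x (j K)) = Set.range x := by
      exact hjs.range_comp x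
    rwa [this]
  · have : Set.range (fun _ : Finset ℕ => L) = {L} := Set.range_const
    rw [this]
    exact isGLB_singleton
  · intro c
    exact ⟨j c, fun i hi => ⟨hx hi, h.1 ⟨i, rfl⟩⟩⟩

lemma lemAdd {Z : Type*} [AddCommGroup Z] [PartialOrder Z]
    [CovariantClass Z Z (· + ·) (· ≤ ·)]
    {S T : Set Z} {xx yy : Z} (hS : IsLUB S xx) (hT : IsLUB T yy) :
    IsLUB {z | ∃ s ∈ S, ∃ t ∈ T, z = s + t} (xx + yy) := by
  haveI : CovariantClass Z Z (Function.swap (· + ·)) (· ≤ ·) :=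
    ⟨fun c a b h => by simpa [add_comm] using add_le_add_left h c⟩
  constructor
  · rintro z ⟨s, hs, t, ht, rfl⟩
    exact add_le_add (hS.1 hs) (hT.1 ht)
  · intro u hu
    have h1 : ∀ t ∈ T, xx ≤ u - t := by
      intro t ht
      refine hS.2 fun s hs => ?_
      rw [le_sub_iff_add_le]
      exact hu ⟨s, hs, t, ht, rfl⟩
    have h2 : yy ≤ u - xx := by
      refine hT.2 fun t ht => ?_
      have := h1 t ht
      rw [le_sub_iff_add_le] at this ⊢
      rw [add_comm] at this
      exact this
    rw [le_sub_iff_add_le] at h2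
    rwa [add_comm] at h2

lemma sum_mono_of_nonneg {Z : Type*} [AddCommGroup Z] [PartialOrder Z]
    [CovariantClass Z Z (· + ·) (· ≤ ·)] {ι : Type*} [DecidableEq ι]
    {v : ι → Z} {F G : Finset ι} (hFG : F ⊆ G) (hv : ∀ i ∈ G, 0 ≤ v i) :
    ∑ i ∈ F, v i ≤ ∑ i ∈ G, v i := by
  rw [← Finset.sum_sdiff hFG]
  have h0 : 0 ≤ ∑ i ∈ G \ F, v i := by
    refine Finset.sum_induction v (fun z => 0 ≤ z) (fun a b ha hb => by
      simpa using add_le_add ha hb) le_rfl ?_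
    intro i hi
    exact hv i (Finset.mem_sdiff.mp hi).1
  calc ∑ i ∈ F, v i = 0 + ∑ i ∈ F, v i := by rw [zero_add]
    _ ≤ ∑ i ∈ G \ F, v i + ∑ i ∈ F, v i := by
        simpa [add_comm] using add_le_add_left h0 (∑ i ∈ F, v i)

lemma keyLUB {Ω : Type*} {Z : Type*} [AddCommGroup Z] [PartialOrder Z]
    [CovariantClass Z Z (· + ·) (· ≤ ·)]
    (w : Set Ω → Z) (T : Set (Set Ω)) (hT : T.Countable) (hTne : ∅ ∉ T)
    (hw0 : ∀ α, α ∈ T ∨ α = ∅ → 0 ≤ w α) (hwe : w ∅ = 0) (L : Z)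
    (hL : ∀ B : ℕ → Set Ω,
      (∀ k, B k ∈ T ∨ B k = ∅) →
      (∀ k l, k ≠ l → B k ≠ B l ∨ B k = ∅) →
      (∀ α ∈ T, ∃ k, B k = α) →
      OrderConvergesTo (fun K : Finset ℕ => ∑ k ∈ K, w (B k)) L) :
    IsLUB {z | ∃ F : Finset (Set Ω), ↑F ⊆ T ∧ z = ∑ α ∈ F, w α} L := by
  classical
  haveI := hT.toEncodable
  set B : ℕ → Set Ω := fun k => ((Encodable.decode₂ T k).map Subtype.val).getD ∅ with hB
  have hBmem : ∀ k, B k ∈ T ∨ B k = ∅ := by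
    intro k
    rcases h : Encodable.decode₂ T k with _ | α
    · right; simp [hB, h]
    · left; simpa [hB, h] using α.2
  have hBinj : ∀ k l, k ≠ l → B k ≠ B l ∨ B k = ∅ := by
    intro k l hkl
    rcases h : Encodable.decode₂ T k with _ | α
    · right; simp [hB, h]
    rcases h' : Encodable.decode₂ T l with _ | β
    · left
      have hk : B k = (α : Set Ω) := by simp [hB, h]
      have hl : B l = ∅ := by simp [hB, h']
      rw [hk, hl]
      intro hc
      exact hTne (hc ▸ α.2)
    · left
      have hk : B k = (α : Set Ω) := by simp [hB, h]
      have hl : B l = (β : Set Ω) := by simp [hB, h']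
      rw [hk, hl]
      intro hc
      apply hkl
      have : α = β := Subtype.ext hc
      rw [← Encodable.mem_decode₂.mp (h ▸ rfl : α ∈ Encodable.decode₂ T k),
        ← Encodable.mem_decode₂.mp (h' ▸ rfl : β ∈ Encodable.decode₂ T l), this]
  have hBsurj : ∀ α ∈ T, ∃ k, B k = α := by
    intro α hα
    refine ⟨Encodable.encode (⟨α, hα⟩ : T), ?_⟩
    simp [hB, Encodable.decode₂_encode]
  have hconv := hL B hBmem hBinj hBsurj
  have hmono : Monotone (fun K : Finset ℕ => ∑ k ∈ K, w (B k)) := by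
    intro K K' hKK'
    exact sum_mono_of_nonneg hKK' fun k _ => hw0 _ (hBmem k)
  have hLUB := lemA (fun i j => ⟨i ⊔ j, le_sup_left, le_sup_right⟩) hmono hconv
  constructor
  · rintro z ⟨F, hF, rfl⟩
    refine le_trans (le_of_eq ?_) (hLUB.1 ⟨F.attach.image
      (fun α => Encodable.encode (⟨α.1, hF α.2⟩ : T)), rfl⟩)
    beta_reduce
    rw [Finset.sum_image ?hinj]
    case hinj =>
      intro a _ b _ hab
      have h3 := Encodable.encode_injective hab
      exact Subtype.ext (Subtype.mk_eq_mk.mp h3)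
    rw [← Finset.sum_attach F w]
    refine Finset.sum_congr rfl fun α _ => ?_
    have : B (Encodable.encode (⟨α.1, hF α.2⟩ : T)) = α.1 := by
      simp [hB, Encodable.decode₂_encode]
    rw [this]
  · intro u hu
    refine hLUB.2 ?_
    rintro _ ⟨K, rfl⟩
    set K' := K.filter (fun k => B k ≠ ∅) with hK'
    have h1 : ∑ k ∈ K, w (B k) = ∑ k ∈ K', w (B k) := by
      refine (Finset.sum_subset (Finset.filter_subset _ _) ?_).symm
      intro k hk hk'
      have : B k = ∅ := by
        by_contra hc
        exact hk' (Finset.mem_filter.mpr ⟨hk, hc⟩)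
      rw [this, hwe]
    have h2 : ∑ α ∈ K'.image B, w α = ∑ k ∈ K', w (B k) := by
      refine Finset.sum_image ?_
      intro k hk l hl hkl
      by_contra hne
      rcases hBinj k l hne with h | h
      · exact h hkl
      · exact (Finset.mem_filter.mp hk).2 h
    beta_reduce
    rw [h1, ← h2]
    refine hu ⟨K'.image B, ?_, rfl⟩
    intro α hα
    simp only [Finset.coe_image, Set.mem_image, Finset.mem_coe] at hα
    obtain ⟨k, hk, rfl⟩ := hα
    rcases hBmem k with h | h
    · exact h
    · exact absurd h (Finset.mem_filter.mp hk).2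
/-- A nonnegative elementary function whose defining unordered sum
order-converges to `s` is `S*`-partition integrable on the union of its
defining sets, with integral `s`. -/
theorem elementary_sStarPartitionIntegrable
    {Ω : Type*} [MeasurableSpace Ω]
    {X Y Z : Type*}
    [Lattice X] [AddCommGroup X] [CovariantClass X X (· + ·) (· ≤ ·)]
    [Module ℝ X] [PosSMulMono ℝ X]
    [Lattice Y] [AddCommGroup Y] [CovariantClass Y Y (· + ·) (· ≤ ·)]
    [Module ℝ Y] [PosSMulMono ℝ Y]
    [Lattice Z] [AddCommGroup Z] [CovariantClass Z Z (· + ·) (· ≤ ·)]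
    [Module ℝ Z] [PosSMulMono ℝ Z]
    (hded : DedekindComplete Z)
    (μ : Set Ω → Y)
    (hμ0 : ∀ A : Set Ω, MeasurableSet A → 0 ≤ μ A)
    (hμσ : SigmaAdditive μ)
    (b : X → Y → Z)
    (hb_addl : ∀ x x' y, b (x + x') y = b x y + b x' y)
    (hb_addr : ∀ x y y', b x (y + y') = b x y + b x y')
    (hb_pos : ∀ x y, 0 ≤ x → 0 ≤ y → 0 ≤ b x y)
    (hb_mono : ∀ x x' y y', 0 ≤ x → x ≤ x' → 0 ≤ y → y ≤ y' → b x y ≤ b x' y')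
    (hb_transport : TransportsSigmaAdditivity μ b)
    (A : ℕ → Set Ω) (hA : ∀ n, MeasurableSet (A n))
    (hAdisj : Pairwise fun m n => Disjoint (A m) (A n))
    (a : ℕ → X) (ha : ∀ n, 0 ≤ a n)
    (f : Ω → X)
    (hf₁ : ∀ n, ∀ ω ∈ A n, f ω = a n)
    (hf₂ : ∀ ω, ω ∉ ⋃ n, A n → f ω = (0 : X))
    (s : Z)
    (hs : OrderConvergesTo (fun F : Finset ℕ => ∑ n ∈ F, b (a n) (μ (A n))) s) :
    SStarPartitionIntegrable μ b f (⋃ n, A n) s := by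
  classical
  intro δ hδ
  -- directedness of Finset ℕ
  have hdirF : ∀ i j : Finset ℕ, ∃ k, i ≤ k ∧ j ≤ k :=
    fun i j => ⟨i ⊔ j, le_sup_left, le_sup_right⟩
  -- μ ∅ = 0
  have hμe : μ ∅ = 0 := by
    have hconv := hμσ (fun _ => ∅) (fun _ => MeasurableSet.empty)
      (fun m n _ => by simp)
    rw [Set.iUnion_empty] at hconv
    have hmono : Monotone (fun F : Finset ℕ => ∑ _n ∈ F, μ ∅) :=
      fun F G h => sum_mono_of_nonneg h fun _ _ => hμ0 ∅ MeasurableSet.empty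
    have hLUB := lemA hdirF hmono hconv
    have h2 : μ ∅ + μ ∅ ≤ μ ∅ := by
      have h := hLUB.1 ⟨({0, 1} : Finset ℕ), rfl⟩
      simp only [Finset.sum_pair (by norm_num : (0 : ℕ) ≠ 1)] at h
      exact h
    have h3 : μ ∅ ≤ 0 := add_le_iff_nonpos_left.mp h2
    exact le_antisymm h3 (hμ0 ∅ MeasurableSet.empty)
  -- b x 0 = 0
  have hb0 : ∀ x, b x 0 = 0 := by
    intro x
    have := hb_addr x 0 0
    rw [add_zero] at this
    exact (left_eq_add.mp this)
  -- s is the LUB of the defining sums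
  have hsLUB : IsLUB (Set.range fun F : Finset ℕ => ∑ n ∈ F, b (a n) (μ (A n))) s := by
    refine lemA hdirF ?_ hs
    intro F G h
    exact sum_mono_of_nonneg h fun n _ => hb_pos _ _ (ha n) (hμ0 _ (hA n))
  -- trivial regulator
  refine ⟨fun _ _ => 0, ⟨fun i j => le_rfl, fun i => by
    have : (Set.range fun _ : ℕ => (0 : Z)) = {0} := Set.range_const
    rw [this]; exact isGLB_singleton⟩, ?_⟩
  intro φ
  refine ⟨0, by
    have : (Set.range fun _ : ℕ => (0 : Z)) = {0} := Set.range_const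
    rw [this]; exact isLUB_singleton, ?_⟩
  -- the base partition P₀
  refine ⟨A '' {n | (A n).Nonempty}, ⟨(Set.to_countable _).image A, ?_, ?_, ?_, ?_⟩, ?_⟩
  · rintro t ⟨n, -, rfl⟩; exact hA n
  · rintro t ⟨n, hn, rfl⟩; exact hn
  · rintro t ⟨m, -, rfl⟩ t' ⟨n, -, rfl⟩ hne
    exact hAdisj (by rintro rfl; exact hne rfl)
  · ext ω
    simp only [Set.sUnion_image, Set.mem_iUnion, Set.mem_setOf_eq]
    constructor
    · rintro ⟨n, -, h⟩; exact ⟨n, h⟩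
    · rintro ⟨n, h⟩; exact ⟨n, ⟨ω, h⟩, h⟩
  -- arbitrary refining partition P
  intro P hP hPr
  obtain ⟨hPc, hPm, hPne, hPd, hPu⟩ := hP
  -- labels
  have hgex : ∀ α : Set Ω, ∃ n, α ∈ P → α ⊆ A n := by
    intro α
    by_cases hα : α ∈ P
    · obtain ⟨t, ht, hsub⟩ := hPr α hα
      obtain ⟨n, -, rfl⟩ := ht
      exact ⟨n, fun _ => hsub⟩
    · exact ⟨0, fun h => absurd h hα⟩
  choose g hg using hgex
  set v : Set Ω → Z := fun α => b (f (δ α)) (μ α) with hv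
  have hva : ∀ α ∈ P, v α = b (a (g α)) (μ α) := by
    intro α hα
    have hδα : δ α ∈ α := hδ α (hPne α hα)
    simp only [hv]
    rw [hf₁ (g α) (δ α) (hg α hα hδα)]
  have hv0 : ∀ α ∈ P, 0 ≤ v α := fun α hα =>
    (hva α hα) ▸ hb_pos _ _ (ha _) (hμ0 α (hPm α hα))
  have hve : v ∅ = 0 := by simp only [hv]; rw [hμe, hb0]
  -- fibers
  have hfib_union : ∀ n, (⋃₀ {α | α ∈ P ∧ g α = n}) = A n := by
    intro n
    ext ω
    constructor
    · rintro ⟨α, ⟨hαP, hgα⟩, hω⟩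
      exact hgα ▸ hg α hαP hω
    · intro hω
      have hω' : ω ∈ ⋃₀ P := hPu.symm ▸ (Set.mem_iUnion.mpr ⟨n, hω⟩)
      obtain ⟨α, hαP, hωα⟩ := hω'
      have h1 : ω ∈ A (g α) := hg α hαP hωα
      have h2 : g α = n := by
        by_contra hne
        exact Set.disjoint_left.mp (hAdisj hne) h1 hω
      exact ⟨α, ⟨hαP, h2⟩, hωα⟩
  -- per-label LUBs
  have hSn : ∀ n, IsLUB {z | ∃ F : Finset (Set Ω),
      ↑F ⊆ {α | α ∈ P ∧ g α = n} ∧ z = ∑ α ∈ F, v α} (b (a n) (μ (A n))) := by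
    intro n
    refine keyLUB v _ (hPc.mono fun α h => h.1) (fun h => (hPne ∅ h.1).ne_empty rfl)
      (fun α h => ?_) hve _ (fun B hBmem hBinj hBsurj => ?_)
    · rcases h with h | rfl
      · exact hv0 α h.1
      · exact hve.ge
    · have hBeq : ∀ k, v (B k) = b (a n) (μ (B k)) := by
        intro k
        rcases hBmem k with h | h
        · rw [hva _ h.1, h.2]
        · rw [h, hve, hμe, hb0]
      have heq : (fun K : Finset ℕ => ∑ k ∈ K, v (B k))
          = fun K : Finset ℕ => ∑ k ∈ K, b (a n) (μ (B k)) :=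
        funext fun K => Finset.sum_congr rfl fun k _ => hBeq k
      rw [heq]
      have hBmeas : ∀ k, MeasurableSet (B k) := by
        intro k
        rcases hBmem k with h | h
        · exact hPm _ h.1
        · rw [h]; exact MeasurableSet.empty
      have hBdisj : Pairwise fun k l => Disjoint (B k) (B l) := by
        intro k l hkl
        rcases hBinj k l hkl with hne | he
        · rcases hBmem k with hk | hk
          · rcases hBmem l with hl | hl
            · exact hPd _ hk.1 _ hl.1 hne
            · rw [hl]; exact disjoint_bot_right
          · rw [hk]; exact disjoint_bot_left
        · rw [he]; exact disjoint_bot_left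
      have hUnion : (⋃ k, B k) = A n := by
        rw [← hfib_union n]
        ext ω
        constructor
        · intro hmem
          obtain ⟨k, hω⟩ := Set.mem_iUnion.mp hmem
          rcases hBmem k with h | h
          · exact ⟨B k, h, hω⟩
          · rw [h] at hω; exact absurd hω (Set.notMem_empty ω)
        · rintro ⟨α, hα, hω⟩
          obtain ⟨k, rfl⟩ := hBsurj α hα
          exact Set.mem_iUnion.mpr ⟨k, hω⟩
      have := hb_transport (a n) (ha n) B hBmeas hBdisj
      rwa [hUnion] at this
  -- induction over finite label sets
  have hD : ∀ G : Finset ℕ, IsLUB {z | ∃ F : Finset (Set Ω), ↑F ⊆ P ∧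
      (∀ α ∈ F, g α ∈ G) ∧ z = ∑ α ∈ F, v α} (∑ n ∈ G, b (a n) (μ (A n))) := by
    intro G
    induction G using Finset.induction with
    | empty =>
      have hset : {z | ∃ F : Finset (Set Ω), ↑F ⊆ P ∧
          (∀ α ∈ F, g α ∈ (∅ : Finset ℕ)) ∧ z = ∑ α ∈ F, v α} = {(0 : Z)} := by
        ext z
        simp only [Set.mem_setOf_eq, Set.mem_singleton_iff]
        constructor
        · rintro ⟨F, -, hlab, rfl⟩
          have : F = ∅ := Finset.eq_empty_of_forall_notMem
            fun α hα => by simpa using hlab α hα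
          rw [this, Finset.sum_empty]
        · rintro rfl
          exact ⟨∅, by simp, by simp, by simp⟩
      rw [hset, Finset.sum_empty]
      exact isLUB_singleton
    | @insert n G hn ih =>
      rw [Finset.sum_insert hn]
      have hadd := lemAdd (hSn n) ih
      have hset : {z | ∃ F : Finset (Set Ω), ↑F ⊆ P ∧
          (∀ α ∈ F, g α ∈ insert n G) ∧ z = ∑ α ∈ F, v α}
          = {z | ∃ s₁ ∈ {z | ∃ F : Finset (Set Ω),
              ↑F ⊆ {α | α ∈ P ∧ g α = n} ∧ z = ∑ α ∈ F, v α},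
            ∃ t₁ ∈ {z | ∃ F : Finset (Set Ω), ↑F ⊆ P ∧
              (∀ α ∈ F, g α ∈ G) ∧ z = ∑ α ∈ F, v α}, z = s₁ + t₁} := by
        ext z
        simp only [Set.mem_setOf_eq]
        constructor
        · rintro ⟨F, hFP, hlab, rfl⟩
          have hp1 : ↑(F.filter (fun α => g α = n)) ⊆ {α | α ∈ P ∧ g α = n} := by
            intro α hα
            have h' := Finset.mem_filter.mp (Finset.mem_coe.mp hα)
            exact ⟨hFP (Finset.mem_coe.mpr h'.1), h'.2⟩
          have hp2 : ↑(F.filter (fun α => ¬ g α = n)) ⊆ P := by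
            intro α hα
            exact hFP (Finset.mem_coe.mpr
              (Finset.mem_filter.mp (Finset.mem_coe.mp hα)).1)
          have hlab2 : ∀ α ∈ F.filter (fun α => ¬ g α = n), g α ∈ G := by
            intro α hα
            rw [Finset.mem_filter] at hα
            rcases Finset.mem_insert.mp (hlab α hα.1) with h | h
            · exact absurd h hα.2
            · exact h
          have hsum : ∑ α ∈ F, v α = (∑ α ∈ F.filter (fun α => g α = n), v α)
              + ∑ α ∈ F.filter (fun α => ¬ g α = n), v α :=
            (Finset.sum_filter_add_sum_filter_not F (fun α => g α = n) v).symm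
          exact ⟨_, ⟨F.filter (fun α => g α = n), hp1, rfl⟩,
            _, ⟨F.filter (fun α => ¬ g α = n), hp2, hlab2, rfl⟩, hsum⟩
        · rintro ⟨s₁, ⟨F₁, hF₁, rfl⟩, t₁, ⟨F₂, hF₂P, hF₂lab, rfl⟩, rfl⟩
          have hdisj : Disjoint F₁ F₂ := by
            rw [Finset.disjoint_left]
            intro α h1 h2
            have hga : g α = n := (hF₁ (Finset.mem_coe.mpr h1)).2
            exact hn (hga ▸ hF₂lab α h2)
          refine ⟨F₁ ∪ F₂, ?_, ?_, (Finset.sum_union hdisj).symm⟩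
          · intro α hα
            rcases Finset.mem_union.mp (Finset.mem_coe.mp hα) with h | h
            · exact (hF₁ (Finset.mem_coe.mpr h)).1
            · exact hF₂P (Finset.mem_coe.mpr h)
          · intro α hα
            rcases Finset.mem_union.mp hα with h | h
            · exact Finset.mem_insert.mpr (Or.inl (hF₁ (Finset.mem_coe.mpr h)).2)
            · exact Finset.mem_insert.mpr (Or.inr (hF₂lab α h))
      rw [hset]
      exact hadd
  -- the global LUB
  have hTall : IsLUB {z | ∃ F : Finset (Set Ω), ↑F ⊆ P ∧ z = ∑ α ∈ F, v α} s := by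
    constructor
    · rintro z ⟨F, hF, rfl⟩
      have h1 := (hD (F.image g)).1 ⟨F, hF,
        fun α hα => Finset.mem_image_of_mem g hα, rfl⟩
      exact h1.trans (hsLUB.1 ⟨F.image g, rfl⟩)
    · intro u hu
      refine hsLUB.2 ?_
      rintro _ ⟨G, rfl⟩
      refine (hD G).2 fun z hz => ?_
      obtain ⟨F, hF, -, rfl⟩ := hz
      exact hu ⟨F, hF, rfl⟩
  -- conclude
  refine ⟨s, ?_, by rw [sub_self, abs_zero]⟩
  have hmono : Monotone (fun F : {F : Finset (Set Ω) // ↑F ⊆ P} => ∑ α ∈ F.1, v α) := by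
    intro F G hFG
    exact sum_mono_of_nonneg hFG fun α hα => hv0 α (G.2 (Finset.mem_coe.mpr hα))
  have hrange : Set.range (fun F : {F : Finset (Set Ω) // ↑F ⊆ P} => ∑ α ∈ F.1, v α)
      = {z | ∃ F : Finset (Set Ω), ↑F ⊆ P ∧ z = ∑ α ∈ F, v α} := by
    ext z
    constructor
    · rintro ⟨F, rfl⟩; exact ⟨F.1, F.2, rfl⟩
    · rintro ⟨F, hF, rfl⟩; exact ⟨⟨F, hF⟩, rfl⟩
  have hT2 : IsLUB (Set.range (fun F : {F : Finset (Set Ω) // ↑F ⊆ P} =>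
      ∑ α ∈ F.1, v α)) s := by rw [hrange]; exact hTall
  -- a monotone surjection from Finset ℕ
  haveI := hPc.toEncodable
  set o : ℕ → Option (Set Ω) := fun k => (Encodable.decode₂ P k).map Subtype.val with ho
  have hoinj : ∀ k k' β, β ∈ o k → β ∈ o k' → k = k' := by
    intro k k' β h h'
    rcases Option.map_eq_some_iff.mp (Option.mem_def.mp h) with ⟨α, hα, rfl⟩
    rcases Option.map_eq_some_iff.mp (Option.mem_def.mp h') with ⟨α', hα', hval⟩
    have hαα : α = α' := Subtype.ext hval.symm
    rw [← Encodable.mem_decode₂.mp (Option.mem_def.mpr hα),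
      ← Encodable.mem_decode₂.mp (Option.mem_def.mpr hα'), hαα]
  have hosub : ∀ k β, o k = some β → β ∈ P := by
    intro k β h
    rcases Option.map_eq_some_iff.mp h with ⟨α, -, rfl⟩
    exact α.2
  set j : Finset ℕ → {F : Finset (Set Ω) // ↑F ⊆ P} := fun K =>
    ⟨K.filterMap o hoinj, fun β hβ => by
      obtain ⟨k, -, hk⟩ := (Finset.mem_filterMap o).mp (Finset.mem_coe.mp hβ)
      exact hosub k β hk⟩ with hj
  have hjm : Monotone j := by
    intro K K' hKK'
    have hsub : K.filterMap o hoinj ⊆ K'.filterMap o hoinj := by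
      intro β hβ
      obtain ⟨k, hk, hok⟩ := (Finset.mem_filterMap o).mp hβ
      exact (Finset.mem_filterMap o).mpr ⟨k, hKK' hk, hok⟩
    exact hsub
  have hjs : Function.Surjective j := by
    rintro ⟨F, hF⟩
    refine ⟨F.attach.image (fun α => Encodable.encode
      (⟨α.1, hF (Finset.mem_coe.mpr α.2)⟩ : P)), ?_⟩
    apply Subtype.ext
    simp only [hj]
    ext β
    rw [Finset.mem_filterMap o]
    constructor
    · rintro ⟨k, hk, hok⟩
      obtain ⟨α, -, rfl⟩ := Finset.mem_image.mp hk
      have : o (Encodable.encode (⟨α.1, hF (Finset.mem_coe.mpr α.2)⟩ : P))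
          = some α.1 := by
        simp only [ho, Encodable.decode₂_encode, Option.map_some]
      rw [this] at hok
      exact (Option.some_inj.mp hok) ▸ α.2
    · intro hβ
      refine ⟨Encodable.encode (⟨β, hF (Finset.mem_coe.mpr hβ)⟩ : P),
        Finset.mem_image.mpr ⟨⟨β, hβ⟩, Finset.mem_attach _ _, rfl⟩, ?_⟩
      simp only [ho, Encodable.decode₂_encode, Option.map_some]
  exact lemB hmono hT2 j hjm hjs
end

section
/- Let Ω be a set, H a family of subsets of Ω with ∅ ∈ H, Z a topological real vector space, X, Y sets, f : Ω → X, μ : H → Y and b : X × Y → Z a map. Let 𝒫(Ω) denote the collection of countable partitions of Ω into nonempty pairwise disjoint members of H, assumed nonempty and directed by refinement. Suppose f is S*-integrable on Ω with integral s ∈ Z, i.e. for every choice function δ and every neighbourhood U of 0 in Z there exists P₀ ∈ 𝒫(Ω) such that for every P ∈ 𝒫(Ω) refining P₀ the unordered series ∑_{α∈P} b(f(δ(α)), μ(α)) converges in the topology of Z to a sum lying in s + U. Then f is Sion integrable on Ω with integral s: for every choice function δ and every neighbourhood U of 0 in Z there exists a pair (P₀, Δ₀), with P₀ ∈ 𝒫(Ω)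 and Δ₀ a truncation, such that for every pair (P, Δ) with P refining P₀ and Δ₀(M) ⊆ Δ(M) for every M ∈ 𝒫(Ω) refining P, the finite sum ∑_{α ∈ Δ(P)} b(f(δ(α)), μ(α)) lies in s + U. -/
/-- `P` is a countable partition of `A` into nonempty pairwise disjoint members
of the paving `H`. -/
def IsCP {Ω : Type*} (H : Set (Set Ω)) (A : Set Ω) (P : Set (Set Ω)) : Prop :=
  P.Countable ∧ (∀ s ∈ P, s ∈ H) ∧ (∀ s ∈ P, s.Nonempty) ∧
    (∀ s ∈ P, ∀ t ∈ P, s ≠ t → Disjoint s t) ∧ ⋃₀ P = A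

/-- In a topological real vector space, `S*`-integrability
(topological convergence of the unordered series over refining countable
partitions) implies Sion integrability, with the same integral. -/
theorem sion_integrable_of_sStar_integrable
    {Ω X Y Z : Type*}
    [AddCommGroup Z] [Module ℝ Z] [TopologicalSpace Z]
    [IsTopologicalAddGroup Z] [ContinuousSMul ℝ Z]
    (H : Set (Set Ω)) (hH : ∅ ∈ H)
    (f : Ω → X) (μ : Set Ω → Y) (b : X → Y → Z)
    (hne : ∃ P, IsCP H Set.univ P)
    (hdir : ∀ P Q, IsCP H Set.univ P → IsCP H Set.univ Q →
      ∃ R, IsCP H Set.univ R ∧ Refines R P ∧ Refines R Q)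
    (s : Z)
    (hint : ∀ δ : Set Ω → Ω, (∀ S : Set Ω, S.Nonempty → δ S ∈ S) →
      ∀ U ∈ nhds (0 : Z),
        ∃ P₀ : Set (Set Ω), IsCP H Set.univ P₀ ∧
          ∀ P : Set (Set Ω), IsCP H Set.univ P → Refines P P₀ →
            ∃ t : Z,
              Filter.Tendsto
                (fun F : {F : Finset (Set Ω) // ↑F ⊆ P} =>
                  ∑ α ∈ F.1, b (f (δ α)) (μ α))
                Filter.atTop (nhds t) ∧
              ∃ u ∈ U, t = s + u) :
    ∀ δ : Set Ω → Ω, (∀ S : Set Ω, S.Nonempty → δ S ∈ S) →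
      ∀ U ∈ nhds (0 : Z),
        ∃ (P₀ : Set (Set Ω)) (Δ₀ : Set (Set Ω) → Finset (Set Ω)),
          IsCP H Set.univ P₀ ∧
          (∀ P, IsCP H Set.univ P → ↑(Δ₀ P) ⊆ P) ∧
          ∀ (P : Set (Set Ω)) (Δ : Set (Set Ω) → Finset (Set Ω)),
            IsCP H Set.univ P →
            (∀ Q, IsCP H Set.univ Q → ↑(Δ Q) ⊆ Q) →
            Refines P P₀ →
            (∀ M, IsCP H Set.univ M → Refines M P → Δ₀ M ⊆ Δ M) →
            ∃ u ∈ U, ∑ α ∈ Δ P, b (f (δ α)) (μ α) = s + u := by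
  classical
  intro δ hδ U hU
  obtain ⟨W, hW, hWU⟩ := exists_nhds_zero_half hU
  obtain ⟨P₀, hP₀, hP₀prop⟩ := hint δ hδ W hW
  -- key: for each M refining P₀, a good finite F₀
  have key : ∀ M, IsCP H Set.univ M → Refines M P₀ →
      ∃ F₀ : Finset (Set Ω), ↑F₀ ⊆ M ∧
        ∀ G : Finset (Set Ω), ↑G ⊆ M → F₀ ⊆ G →
          ∃ u ∈ U, ∑ α ∈ G, b (f (δ α)) (μ α) = s + u := by
    intro M hM hMref
    obtain ⟨t, ht, u, huW, htu⟩ := hP₀prop M hM hMref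
    haveI : Nonempty {F : Finset (Set Ω) // ↑F ⊆ M} :=
      ⟨⟨∅, by simp⟩⟩
    haveI : IsDirected {F : Finset (Set Ω) // ↑F ⊆ M} (· ≤ ·) :=
      ⟨fun a b => ⟨⟨a.1 ∪ b.1, by push_cast; exact Set.union_subset a.2 b.2⟩,
        Finset.subset_union_left, Finset.subset_union_right⟩⟩
    have hV : {z : Z | z - t ∈ W} ∈ nhds t := by
      have : Filter.Tendsto (fun z : Z => z - t) (nhds t) (nhds (t - t)) :=
        (continuous_sub_right t).tendsto t
      rw [sub_self] at this
      exact this hW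
    have := ht hV
    rw [Filter.mem_map, Filter.mem_atTop_sets] at this
    obtain ⟨F₀, hF₀⟩ := this
    refine ⟨F₀.1, F₀.2, fun G hGM hFG => ?_⟩
    have hmem := hF₀ ⟨G, hGM⟩ hFG
    have hw : (∑ α ∈ G, b (f (δ α)) (μ α)) - t ∈ W := hmem
    refine ⟨u + ((∑ α ∈ G, b (f (δ α)) (μ α)) - t), hWU u huW _ hw, ?_⟩
    rw [htu]; abel
  choose Φ hΦsub hΦ using key
  classical
  refine ⟨P₀, fun M => if h : IsCP H Set.univ M ∧ Refines M P₀ then Φ M h.1 h.2 else ∅,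
    hP₀, ?_, ?_⟩
  · intro P hP
    by_cases h : IsCP H Set.univ P ∧ Refines P P₀
    · simpa [h] using hΦsub P h.1 h.2
    · simp [h]
  · intro P Δ hP hΔ hPref hmono
    have hself : Refines P P := fun a ha => ⟨a, ha, subset_rfl⟩
    have h : IsCP H Set.univ P ∧ Refines P P₀ := ⟨hP, hPref⟩
    have hsub : Φ P h.1 h.2 ⊆ Δ P := by
      have := hmono P hP hself
      simpa [h] using this
    exact hΦ P h.1 h.2 (Δ P) (hΔ P hP) hsub
end

section
/- Let H be a σ-algebra on a set Ω, X, Y, Z Riesz spaces with Z Dedekind complete, b : X × Y → Z additive in each variable and isotone on positive cones, μ : H → Y nonnegative and finitely additive, N ∈ H with μ(N) = 0, and f : Ω → X with f(ω) ≥ 0 for all ω. If f is S*-partition integrable on Ω \ N with integral s ∈ Z, then f is S*-partition integrable on Ω with integral s. -/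
/-- A nonnegative function that is `S*`-partition integrable on
the complement of a `μ`-null set is `S*`-partition integrable on all of `Ω`
with the same integral. -/
theorem sStar_integrable_of_integrable_off_null_set
    {Ω : Type*} [MeasurableSpace Ω]
    {X Y Z : Type*}
    [Lattice X] [AddCommGroup X] [CovariantClass X X (· + ·) (· ≤ ·)]
    [Module ℝ X] [PosSMulMono ℝ X]
    [Lattice Y] [AddCommGroup Y] [CovariantClass Y Y (· + ·) (· ≤ ·)]
    [Module ℝ Y] [PosSMulMono ℝ Y]
    [Lattice Z] [AddCommGroup Z] [CovariantClass Z Z (· + ·) (· ≤ ·)]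
    [Module ℝ Z] [PosSMulMono ℝ Z]
    (hded : DedekindComplete Z)
    (b : X → Y → Z)
    (hb_addl : ∀ x x' y, b (x + x') y = b x y + b x' y)
    (hb_addr : ∀ x y y', b x (y + y') = b x y + b x y')
    (hb_pos : ∀ x y, 0 ≤ x → 0 ≤ y → 0 ≤ b x y)
    (hb_mono : ∀ x x' y y', 0 ≤ x → x ≤ x' → 0 ≤ y → y ≤ y' → b x y ≤ b x' y')
    (μ : Set Ω → Y)
    (hμ0 : ∀ A : Set Ω, MeasurableSet A → 0 ≤ μ A)
    (hμadd : ∀ (n : ℕ) (c : Fin n → Set Ω), (∀ k, MeasurableSet (c k)) →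
      (Pairwise fun k l => Disjoint (c k) (c l)) →
      μ (⋃ k, c k) = ∑ k, μ (c k))
    (N : Set Ω) (hN : MeasurableSet N) (hμN : μ N = 0)
    (f : Ω → X) (hf : ∀ ω, 0 ≤ f ω)
    (s : Z)
    (h : SStarPartitionIntegrable μ b f (Set.univ \ N) s) :
    SStarPartitionIntegrable μ b f Set.univ s := by
  classical
  rcases Set.eq_empty_or_nonempty N with hNe | hNne
  · rw [hNe, Set.diff_empty] at h
    exact h
  have hb0 : ∀ x : X, b x 0 = 0 := by
    intro x
    have h1 := hb_addr x 0 0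
    rw [add_zero] at h1
    exact (add_eq_right.mp h1.symm)
  have hμzero : ∀ α : Set Ω, MeasurableSet α → α ⊆ N → μ α = 0 := by
    intro α hαm hαN
    have hun : (⋃ k : Fin 2, ![α, N \ α] k) = N := by
      ext x
      simp only [Set.mem_iUnion, Fin.exists_fin_two, Matrix.cons_val_zero,
        Matrix.cons_val_one, Matrix.head_cons, Set.mem_diff]
      constructor
      · rintro (h1 | ⟨h1, _⟩)
        · exact hαN h1
        · exact h1
      · intro h1
        by_cases hx : x ∈ α
        · exact Or.inl hx
        · exact Or.inr ⟨h1, hx⟩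
    have hadd := hμadd 2 ![α, N \ α] (by
        intro k
        fin_cases k
        · exact hαm
        · exact hN.diff hαm)
      (by
        intro k l hkl
        fin_cases k <;> fin_cases l <;>
          simp_all [Set.disjoint_sdiff_right, Set.disjoint_sdiff_left])
    rw [hun, hμN, Fin.sum_univ_two] at hadd
    simp only [Matrix.cons_val_zero, Matrix.cons_val_one, Matrix.head_cons] at hadd
    have h1 : 0 ≤ μ α := hμ0 α hαm
    have h2 : 0 ≤ μ (N \ α) := hμ0 _ (hN.diff hαm)
    have h3 : μ α ≤ 0 := by
      calc μ α ≤ μ α + μ (N \ α) := le_add_of_nonneg_right h2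
      _ = 0 := hadd.symm
    exact le_antisymm h3 h1
  intro δ hδ
  obtain ⟨a, ha, hA⟩ := h δ hδ
  refine ⟨a, ha, fun φ => ?_⟩
  obtain ⟨t, ht, P₀', hP₀', hmain⟩ := hA φ
  obtain ⟨hc₀, hm₀, hn₀, hd₀, hu₀⟩ := hP₀'
  have hsub₀ : ∀ u ∈ P₀', u ⊆ Set.univ \ N := fun u hu =>
    hu₀ ▸ Set.subset_sUnion_of_mem hu
  refine ⟨t, ht, insert N P₀', ⟨hc₀.insert N, ?_, ?_, ?_, ?_⟩, ?_⟩
  · intro u hu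
    rcases Set.mem_insert_iff.mp hu with rfl | hu
    · exact hN
    · exact hm₀ u hu
  · intro u hu
    rcases Set.mem_insert_iff.mp hu with rfl | hu
    · exact hNne
    · exact hn₀ u hu
  · intro u hu v hv hne
    rcases Set.mem_insert_iff.mp hu with hu' | hu' <;>
      rcases Set.mem_insert_iff.mp hv with hv' | hv'
    · exact absurd (hu'.trans hv'.symm) hne
    · subst hu'
      exact Set.disjoint_left.mpr fun x hxN hxv => (hsub₀ v hv' hxv).2 hxN
    · subst hv'
      exact Set.disjoint_left.mpr fun x hxu hxN => (hsub₀ u hu' hxu).2 hxN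
    · exact hd₀ u hu' v hv' hne
  · rw [Set.sUnion_insert, hu₀, Set.union_diff_cancel (Set.subset_univ N)]
  · intro P hP href
    obtain ⟨hcP, hmP, hnP, hdP, huP⟩ := hP
    have htri : ∀ α ∈ P, α ⊆ N ∨ α ⊆ Set.univ \ N := by
      intro α hα
      obtain ⟨u, hu, hαu⟩ := href α hα
      rcases Set.mem_insert_iff.mp hu with rfl | hu
      · exact Or.inl hαu
      · exact Or.inr (hαu.trans (hsub₀ u hu))
    set P' : Set (Set Ω) := {α | α ∈ P ∧ α ⊆ Set.univ \ N} with hP'def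
    have hP'P : P' ⊆ P := fun α hα => hα.1
    have hP'part : IsCountablePartition (Set.univ \ N) P' := by
      refine ⟨hcP.mono hP'P, fun u hu => hmP u (hP'P hu),
        fun u hu => hnP u (hP'P hu),
        fun u hu v hv => hdP u (hP'P hu) v (hP'P hv), ?_⟩
      apply Set.Subset.antisymm
      · intro x hx
        obtain ⟨α, hα, hxα⟩ := hx
        exact hα.2 hxα
      · intro x hx
        have hx' : x ∈ ⋃₀ P := by rw [huP]; trivial
        obtain ⟨α, hα, hxα⟩ := hx'
        rcases htri α hα with h1 | h1
        · exact absurd (h1 hxα) hx.2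
        · exact ⟨α, ⟨hα, h1⟩, hxα⟩
    have hP'ref : Refines P' P₀' := by
      intro α hα
      obtain ⟨u, hu, hαu⟩ := href α (hP'P hα)
      rcases Set.mem_insert_iff.mp hu with rfl | hu
      · exfalso
        obtain ⟨x, hx⟩ := hnP α (hP'P hα)
        exact (hα.2 hx).2 (hαu hx)
      · exact ⟨u, hu, hαu⟩
    obtain ⟨SP, hconv, hSPt⟩ := hmain P' hP'part hP'ref
    refine ⟨SP, ?_, hSPt⟩
    obtain ⟨C, r, hCne, hdir, z, y, hz, hy, hlub, hglb, hsand⟩ := hconv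
    refine ⟨C, r, hCne, hdir, z, y, hz, hy, hlub, hglb, ?_⟩
    intro c
    obtain ⟨i₀, hi₀⟩ := hsand c
    refine ⟨⟨i₀.1, i₀.2.trans hP'P⟩, ?_⟩
    rintro ⟨F, hF⟩ hle
    have hle' : i₀.1 ⊆ F := hle
    set F' : Finset (Set Ω) := F.filter (fun α => α ⊆ Set.univ \ N) with hF'def
    have hF'P' : ↑F' ⊆ P' := by
      intro α hα
      rw [Finset.mem_coe, hF'def, Finset.mem_filter] at hα
      exact ⟨hF hα.1, hα.2⟩
    have hsub' : i₀.1 ⊆ F' := by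
      intro α hα
      rw [hF'def, Finset.mem_filter]
      exact ⟨hle' hα, (i₀.2 hα).2⟩
    have hsum : ∑ α ∈ F, b (f (δ α)) (μ α) = ∑ α ∈ F', b (f (δ α)) (μ α) := by
      refine (Finset.sum_subset (Finset.filter_subset _ _) ?_).symm
      intro α hαF hαF'
      have hαP : α ∈ P := hF hαF
      have hαN : α ⊆ N := by
        rcases htri α hαP with h1 | h1
        · exact h1
        · exact absurd (by simp only [Finset.mem_filter]; exact ⟨hαF, h1⟩) hαF'
      rw [hμzero α (hmP α hαP) hαN, hb0]
    have := hi₀ ⟨F', hF'P'⟩ hsub'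
    simpa [hsum] using this
end
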